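/- arXiv:math/0601524 — 6 statements merged into one kernel-verified Lean document; each statement's English description precedes it below -/
import Mathlib

section
/- For the Lévy–Prokhorov metric q on P(S), q(P,Q) equals the infimum over all couplings μ of P and Q of inf{ε > 0 : μ{(x,y) : d(x,y) ≥ ε} ≤ ε}. -/
/-!
The inequality `q(P, Q) ≤ inf` holds coupling by coupling: outside the set where the two
coordinates are at least `ε` apart, a point of `B` is paired with a point of the `ε`-thickening
of `B`.

For the converse fix `r > q(P, Q)`. Partition `S` into finitely many measurable cells of small
diameter together with one remainder cell of small mass under `P` and `Q`. On unions of cells,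
the Lévy–Prokhorov inequality `P A ≤ Q Aᵗ + t` is a Hall condition with slack for the bipartite
graph joining two cells when all their points are closer than `r`. A weighted Hall theorem,
obtained from the marriage theorem by rounding the cell masses, turns it into a transport matrix
between the cell masses which moves all but about `r` of the mass along that graph. Spreading
each entry of the matrix as a product measure over its block gives a coupling under which
`{d ≥ r}` has mass at most `r`.
-/

open MeasureTheory Filter Topology Set
open scoped ENNReal NNReal

/-- The Ky Fan distance between two `S`-valued random variables on `(Ω, P)`:
`inf {ε > 0 : P{ω : d(X ω, Y ω) ≥ ε} ≤ ε}`. -/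
noncomputable def kyFanDist {Ω S : Type*} [MeasurableSpace Ω] [PseudoMetricSpace S]
    (P : Measure Ω) (X Y : Ω → S) : ℝ :=
  sInf {ε : ℝ | 0 < ε ∧ (P {ω | ε ≤ dist (X ω) (Y ω)}).toReal ≤ ε}

/-- A measure is nonatomic if every set of positive measure contains a measurable
subset of strictly smaller positive measure. -/
def Nonatomic {Ω : Type*} [MeasurableSpace Ω] (P : Measure Ω) : Prop :=
  ∀ A : Set Ω, MeasurableSet A → 0 < P A →
    ∃ B ⊆ A, MeasurableSet B ∧ 0 < P B ∧ P B < P A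

/-- A finitely supported measure: a finite convex combination of Dirac measures. -/
def FinitelySupported {S : Type*} [MeasurableSpace S] (μ : Measure S) : Prop :=
  ∃ (n : ℕ) (c : Fin n → ℝ≥0∞) (a : Fin n → S),
    (∑ i, c i) = 1 ∧ μ = ∑ i, c i • Measure.dirac (a i)

/-- Continuity of a path of random variables with respect to the Ky Fan metric
(equivalently, the topology of convergence in probability). -/
def KyFanContinuousOn {Ω S : Type*} [MeasurableSpace Ω] [PseudoMetricSpace S]
    (P : Measure Ω) (γ : ℝ → Ω → S) (A : Set ℝ) : Prop :=
  ∀ t ∈ A, ∀ ε > 0, ∃ δ > 0, ∀ s ∈ A, |s - t| < δ → kyFanDist P (γ s) (γ t) < ε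

/-- Continuity of a path of measures with respect to the Lévy–Prokhorov metric. -/
def LPContinuousOn {S : Type*} [MeasurableSpace S] [PseudoMetricSpace S]
    (α : ℝ → Measure S) (A : Set ℝ) : Prop :=
  ∀ t ∈ A, ∀ ε > 0, ∃ δ > 0, ∀ s ∈ A, |s - t| < δ → levyProkhorovDist (α s) (α t) < ε

/-- A polygonal path in the space of measures with vertices in `V`: there is a partition
`0 = t₀ < t₁ < ⋯ < t_{n+1} = 1` and vertices `μᵢ ∈ V` such that on `[tᵢ, tᵢ₊₁]` the path
is the affine interpolation of `μᵢ` and `μᵢ₊₁`. -/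
def IsPolygonalWithVertices {S : Type*} [MeasurableSpace S] (β : ℝ → Measure S)
    (V : Set (Measure S)) : Prop :=
  ∃ (n : ℕ) (t : Fin (n + 2) → ℝ) (μ : Fin (n + 2) → Measure S),
    StrictMono t ∧ t 0 = 0 ∧ t (Fin.last (n + 1)) = 1 ∧ (∀ i, μ i ∈ V) ∧
    ∀ (i : Fin (n + 1)), ∀ s ∈ Set.Icc (t i.castSucc) (t i.succ),
      β s = ENNReal.ofReal ((t i.succ - s) / (t i.succ - t i.castSucc)) • μ i.castSucc
        + ENNReal.ofReal ((s - t i.castSucc) / (t i.succ - t i.castSucc)) • μ i.succ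


section KyFan

open Metric

variable {Ω S : Type*} [MeasurableSpace Ω] [PseudoMetricSpace S] {P : Measure Ω} {X Y : Ω → S}

theorem kyFanDist_le_of_measure_le {r : ℝ} (hr : 0 < r)
    (h : P {ω | r ≤ dist (X ω) (Y ω)} ≤ ENNReal.ofReal r) : kyFanDist P X Y ≤ r :=
  csInf_le ⟨0, fun _ hε => hε.1.le⟩ ⟨hr, ENNReal.toReal_le_of_le_ofReal hr.le h⟩

variable [MeasurableSpace S] [OpensMeasurableSpace S]

theorem levyProkhorovDist_map_le_of_measure_le [IsProbabilityMeasure P] (hX : Measurable X)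
    (hY : Measurable Y) {ε : ℝ} (hε : 0 ≤ ε)
    (h : P {ω | ε ≤ dist (X ω) (Y ω)} ≤ ENNReal.ofReal ε) :
    levyProkhorovDist (P.map X) (P.map Y) ≤ ε := by
  have := Measure.isProbabilityMeasure_map (μ := P) hX.aemeasurable
  have := Measure.isProbabilityMeasure_map (μ := P) hY.aemeasurable
  refine levyProkhorovDist_le_of_forall_le _ _ hε fun ε' B hε' hB => ?_
  have hsub : X ⁻¹' B ⊆ Y ⁻¹' thickening ε' B ∪ {ω | ε ≤ dist (X ω) (Y ω)} := fun ω hω => by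
    by_cases hd : ε ≤ dist (X ω) (Y ω)
    · exact Or.inr hd
    · exact Or.inl (mem_thickening_iff.mpr ⟨X ω, hω, by rw [dist_comm]; linarith⟩)
  calc P.map X B ≤ P (Y ⁻¹' thickening ε' B) + P {ω | ε ≤ dist (X ω) (Y ω)} := by
        rw [Measure.map_apply hX hB]
        exact (measure_mono hsub).trans (measure_union_le _ _)
    _ ≤ P.map Y (thickening ε' B) + ENNReal.ofReal ε' := by
        gcongr
        · exact Measure.le_map_apply hY.aemeasurable _
        · exact h.trans (ENNReal.ofReal_le_ofReal hε'.le)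

theorem levyProkhorovDist_map_le_kyFanDist [IsProbabilityMeasure P] (hX : Measurable X)
    (hY : Measurable Y) : levyProkhorovDist (P.map X) (P.map Y) ≤ kyFanDist P X Y :=
  le_csInf ⟨1, one_pos, ENNReal.toReal_le_of_le_ofReal zero_le_one (by simpa using prob_le_one)⟩
    fun ε ⟨hε, h⟩ => levyProkhorovDist_map_le_of_measure_le hX hY hε.le
      ((ENNReal.le_ofReal_iff_toReal_le (measure_ne_top _ _) hε.le).mpr h)

end KyFan

section Transport

open Finset

variable {V W : Type*} [Fintype W]

/-- The extra demand node `none`, of size `⌈n s⌉ + |W|`, absorbs the slack `s` and the rounding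
errors on the demand side. -/
lemma hall_floor_of_hall_add (p : V → ℝ) (q : W → ℝ) (R : V → W → Prop) [DecidableRel R]
    (hp : ∀ i, 0 ≤ p i) {s : ℝ}
    (hall : ∀ K : Finset V, ∑ i ∈ K, p i ≤ ∑ j with ∃ i ∈ K, R i j, q j + s) (n : ℕ)
    (K : Finset V) :
    ∑ i ∈ K, ⌊n * p i⌋₊ ≤ ∑ o : Option W with ∃ i ∈ K, ∀ j ∈ o, R i j,
      o.elim (⌈n * s⌉₊ + Fintype.card W) fun j => ⌊n * q j⌋₊ := by
  rcases K.eq_empty_or_nonempty with rfl | hK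
  · simp
  have hsum : ∑ o : Option W with ∃ i ∈ K, ∀ j ∈ o, R i j,
      o.elim (⌈n * s⌉₊ + Fintype.card W) (fun j => ⌊n * q j⌋₊) =
        ⌈n * s⌉₊ + Fintype.card W + ∑ j with ∃ i ∈ K, R i j, ⌊n * q j⌋₊ := by
    simp [sum_filter, Fintype.sum_option, hK.exists_mem]
  have hRK : (#{j | ∃ i ∈ K, R i j} : ℝ) ≤ Fintype.card W := by
    exact_mod_cast card_le_univ _
  have hfloor_p : ∑ i ∈ K, (⌊n * p i⌋₊ : ℝ) ≤ n * ∑ i ∈ K, p i := by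
    rw [mul_sum]
    exact sum_le_sum fun i _ => Nat.floor_le (by have := hp i; positivity)
  have hfloor_q : n * ∑ j with ∃ i ∈ K, R i j, q j ≤
      ∑ j with ∃ i ∈ K, R i j, (⌊n * q j⌋₊ : ℝ) + #{j | ∃ i ∈ K, R i j} := by
    rw [mul_sum, card_eq_sum_ones, Nat.cast_sum, ← sum_add_distrib]
    exact sum_le_sum fun j _ => by simpa using (Nat.lt_floor_add_one (n * q j)).le
  have hs := mul_le_mul_of_nonneg_left (hall K) (Nat.cast_nonneg (α := ℝ) n)
  rw [hsum, ← Nat.cast_le (α := ℝ)]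
  push_cast
  linarith [Nat.le_ceil (n * s)]

variable [Fintype V]

lemma card_filter_sigma_fst_mem [DecidableEq V] (c : V → ℕ) (K : Finset V) :
    #{x : Σ i, Fin (c i) | x.1 ∈ K} = ∑ i ∈ K, c i := by
  rw [show ({x | x.1 ∈ K} : Finset (Σ i, Fin (c i))) = K.sigma fun _ => univ by ext; simp,
    card_sigma]
  simp

theorem exists_nat_transport_of_hall (a : V → ℕ) (b : W → ℕ) (R : V → W → Prop)
    [DecidableRel R] (hall : ∀ K : Finset V, ∑ i ∈ K, a i ≤ ∑ j with ∃ i ∈ K, R i j, b j) :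
    ∃ N : V → W → ℕ, (∀ i j, ¬ R i j → N i j = 0) ∧ (∀ i, ∑ j, N i j = a i) ∧
      ∀ j, ∑ i, N i j ≤ b j := by
  classical
  -- Hall's marriage theorem for `a i` copies of each `i` and `b j` copies of each `j`.
  obtain ⟨f, hf_inj, hf_rel⟩ :=
    (Fintype.all_card_le_filter_rel_iff_exists_injective
      (fun (x : Σ i, Fin (a i)) (y : Σ j, Fin (b j)) => R x.1 y.1)).mp fun A => by
      let K := A.image Sigma.fst
      calc #A ≤ #{x : Σ i, Fin (a i) | x.1 ∈ K} :=
            card_le_card fun x hx => by simpa [K] using ⟨x.2, hx⟩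
        _ ≤ #{y : Σ j, Fin (b j) | y.1 ∈ ({j | ∃ i ∈ K, R i j} : Finset W)} := by
            rw [card_filter_sigma_fst_mem, card_filter_sigma_fst_mem]
            exact hall K
        _ = #{y : Σ j, Fin (b j) | ∃ x ∈ A, R x.1 y.1} := by
            congr 1; ext y; simp [K]
  refine ⟨fun i j => #{x | x.1 = i ∧ (f x).1 = j}, fun i j hR => ?_, fun i => ?_, fun j => ?_⟩
  · rw [card_eq_zero, filter_eq_empty_iff]
    rintro x - ⟨rfl, rfl⟩
    exact hR (hf_rel x)
  · have := card_eq_sum_card_fiberwise (f := fun x => (f x).1) (s := {x | x.1 = i})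
      (t := univ) (by simp)
    simp only [filter_filter] at this
    rw [← this]
    simpa using card_filter_sigma_fst_mem a {i}
  · have := card_eq_sum_card_fiberwise (f := Sigma.fst) (s := {x | (f x).1 = j})
      (t := univ) (by simp)
    simp only [filter_filter, and_comm] at this
    rw [← this]
    calc #{x | (f x).1 = j} ≤ #{y : Σ j, Fin (b j) | y.1 ∈ ({j} : Finset W)} :=
          card_le_card_of_injOn f (by simp [Set.MapsTo]) hf_inj.injOn
      _ = b j := by simpa using card_filter_sigma_fst_mem b {j}

theorem exists_subtransport_of_hall_add (p : V → ℝ) (q : W → ℝ) (R : V → W → Prop)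
    [DecidableRel R] (hp : ∀ i, 0 ≤ p i) (hq : ∀ j, 0 ≤ q j) {s θ : ℝ} (hθ : 0 < θ)
    (hall : ∀ K : Finset V, ∑ i ∈ K, p i ≤ ∑ j with ∃ i ∈ K, R i j, q j + s) :
    ∃ m : V → W → ℝ, (∀ i j, 0 ≤ m i j) ∧ (∀ i j, ¬ R i j → m i j = 0) ∧
      (∀ i, ∑ j, m i j ≤ p i) ∧ (∀ j, ∑ i, m i j ≤ q j) ∧
      ∑ i, p i - s - θ ≤ ∑ i, ∑ j, m i j := by
  -- Rounding at scale `n` loses at most `(|V| + |W| + 1) / n` of the mass.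
  obtain ⟨n, hn⟩ := exists_nat_gt ((Fintype.card V + Fintype.card W + 1) / θ)
  have hn0 : (0 : ℝ) < n := lt_of_le_of_lt (by positivity) hn
  obtain ⟨N, hNR, hNrow, hNcol⟩ :=
    exists_nat_transport_of_hall _ _ _ (hall_floor_of_hall_add p q R hp hall n)
  have hrow : ∀ i, (N i none : ℝ) + ∑ j, (N i (some j) : ℝ) = ⌊n * p i⌋₊ := fun i => by
    exact_mod_cast (Fintype.sum_option _).symm.trans (hNrow i)
  have hcol : ∀ j, ∑ i, (N i (some j) : ℝ) ≤ n * q j := fun j => calc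
    ∑ i, (N i (some j) : ℝ) ≤ ⌊n * q j⌋₊ := by exact_mod_cast hNcol (some j)
    _ ≤ n * q j := Nat.floor_le (by have := hq j; positivity)
  have hnone : ∑ i, (N i none : ℝ) < n * s + 1 + Fintype.card W := by
    have hs : 0 ≤ (n : ℝ) * s := mul_nonneg hn0.le (by simpa using hall ∅)
    have := (Nat.cast_le (α := ℝ)).mpr (hNcol none)
    simp only [Option.elim, Nat.cast_sum, Nat.cast_add] at this
    linarith [Nat.ceil_lt_add_one hs]
  refine ⟨fun i j => (N i (some j) : ℝ) / n, fun i j => by positivity,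
    fun i j hR => by simp [hNR i (some j) (by simpa using hR)], fun i => ?_, fun j => ?_, ?_⟩
  · rw [← sum_div, div_le_iff₀' hn0]
    linarith [hrow i, Nat.floor_le (mul_nonneg hn0.le (hp i)), (N i none).cast_nonneg (α := ℝ)]
  · rw [← sum_div, div_le_iff₀' hn0]
    exact hcol j
  · have hfloor : n * ∑ i, p i - Fintype.card V ≤ ∑ i, (⌊n * p i⌋₊ : ℝ) := by
      simpa [sum_sub_distrib, mul_sum] using
        sum_le_sum fun i (_ : i ∈ Finset.univ) => (Nat.sub_one_lt_floor (n * p i)).le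
    have htot : ∑ i, ∑ j, (N i (some j) : ℝ) = ∑ i, (⌊n * p i⌋₊ : ℝ) - ∑ i, (N i none : ℝ) := by
      rw [eq_sub_iff_add_eq, ← sum_add_distrib]
      exact sum_congr rfl fun i _ => by linarith [hrow i]
    rw [div_lt_iff₀ hθ] at hn
    simp_rw [← sum_div]
    rw [le_div_iff₀ hn0]
    nlinarith

theorem exists_le_transport_of_sum_le (p : V → ℝ) (q : W → ℝ) (m : V → W → ℝ)
    (hrow : ∀ i, ∑ j, m i j ≤ p i) (hcol : ∀ j, ∑ i, m i j ≤ q j)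
    (hpq : ∑ i, p i = ∑ j, q j) :
    ∃ M : V → W → ℝ, (∀ i j, m i j ≤ M i j) ∧ (∀ i, ∑ j, M i j = p i) ∧
      ∀ j, ∑ i, M i j = q j := by
  set r : V → ℝ := fun i => p i - ∑ j, m i j
  set c : W → ℝ := fun j => q j - ∑ i, m i j
  have hr : ∀ i, 0 ≤ r i := fun i => sub_nonneg.mpr (hrow i)
  have hc : ∀ j, 0 ≤ c j := fun j => sub_nonneg.mpr (hcol j)
  have hrc : ∑ j, c j = ∑ i, r i := by
    simp only [r, c, sum_sub_distrib, hpq, sum_comm (γ := V)]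
  rcases (sum_nonneg fun i _ => hr i).eq_or_lt with hT | hT
  · have hr0 := (sum_eq_zero_iff_of_nonneg fun i _ => hr i).mp hT.symm
    have hc0 := (sum_eq_zero_iff_of_nonneg fun j _ => hc j).mp (hrc.trans hT.symm)
    refine ⟨m, fun i j => le_rfl, fun i => ?_, fun j => ?_⟩
    · linarith [hr0 i (mem_univ i)]
    · linarith [hc0 j (mem_univ j)]
  refine ⟨fun i j => m i j + r i * c j / ∑ k, r k, fun i j => ?_, fun i => ?_, fun j => ?_⟩
  · have := hr i; have := hc j
    exact le_add_of_nonneg_right (by positivity)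
  · rw [sum_add_distrib, ← sum_div, ← mul_sum, hrc, mul_div_cancel_right₀ _ hT.ne']
    simp [r]
  · rw [sum_add_distrib, ← sum_div, ← sum_mul, mul_div_cancel_left₀ _ hT.ne']
    simp [c]

theorem exists_transport_of_hall_add (p : V → ℝ) (q : W → ℝ) (R : V → W → Prop)
    [DecidableRel R] (hp : ∀ i, 0 ≤ p i) (hq : ∀ j, 0 ≤ q j) (hpq : ∑ i, p i = ∑ j, q j)
    {s θ : ℝ} (hθ : 0 < θ)
    (hall : ∀ K : Finset V, ∑ i ∈ K, p i ≤ ∑ j with ∃ i ∈ K, R i j, q j + s) :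
    ∃ M : V → W → ℝ, (∀ i j, 0 ≤ M i j) ∧ (∀ i, ∑ j, M i j = p i) ∧
      (∀ j, ∑ i, M i j = q j) ∧ ∑ i, ∑ j, (if R i j then 0 else M i j) ≤ s + θ := by
  obtain ⟨m, hm0, hmR, hmrow, hmcol, hmtot⟩ :=
    exists_subtransport_of_hall_add p q R hp hq hθ hall
  obtain ⟨M, hmM, hMrow, hMcol⟩ := exists_le_transport_of_sum_le p q m hmrow hmcol hpq
  refine ⟨M, fun i j => (hm0 i j).trans (hmM i j), hMrow, hMcol, ?_⟩
  calc ∑ i, ∑ j, (if R i j then 0 else M i j) ≤ ∑ i, ∑ j, (M i j - m i j) := by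
        gcongr with i _ j _
        split_ifs with h
        · exact sub_nonneg.mpr (hmM i j)
        · simp [hmR i j h]
    _ = ∑ i, p i - ∑ i, ∑ j, m i j := by simp [sum_sub_distrib, hMrow]
    _ ≤ s + θ := by linarith

end Transport

open Function in
structure IsMeasurablePartition {X ι : Type*} [MeasurableSpace X] (C : ι → Set X) : Prop where
  measurableSet : ∀ i, MeasurableSet (C i)
  pairwise_disjoint : Pairwise (Disjoint on C)
  iUnion_eq_univ : ⋃ i, C i = univ

namespace IsMeasurablePartition

variable {X ι : Type*} [MeasurableSpace X] {C : ι → Set X}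

theorem measure_biUnion_finset (hC : IsMeasurablePartition C) (μ : Measure X) (K : Finset ι) :
    μ (⋃ i ∈ K, C i) = ∑ i ∈ K, μ (C i) :=
  MeasureTheory.measure_biUnion_finset (fun _ _ _ _ h => hC.pairwise_disjoint h)
    fun i _ => hC.measurableSet i

theorem sum_measure [Fintype ι] (hC : IsMeasurablePartition C) (μ : Measure X) :
    ∑ i, μ (C i) = μ univ := by
  rw [← hC.measure_biUnion_finset, ← hC.iUnion_eq_univ]
  simp

theorem sum_restrict [Fintype ι] (hC : IsMeasurablePartition C) (μ : Measure X) :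
    ∑ i, μ.restrict (C i) = μ := by
  rw [← Measure.sum_fintype, ← Measure.restrict_iUnion hC.pairwise_disjoint hC.measurableSet,
    hC.iUnion_eq_univ, Measure.restrict_univ]

end IsMeasurablePartition

section BlockCoupling

open ProbabilityTheory Finset

theorem measure_smul_cond {X : Type*} [MeasurableSpace X] (μ : Measure X) [IsFiniteMeasure μ]
    (s : Set X) : μ s • μ[|s] = μ.restrict s := by
  by_cases hs : μ s = 0
  · simp [Measure.restrict_eq_zero.mpr hs, hs]
  · rw [ProbabilityTheory.cond, smul_smul, ENNReal.mul_inv_cancel hs (measure_ne_top μ s),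
      one_smul]

variable {X Y ι κ : Type*} [MeasurableSpace X] [MeasurableSpace Y] [Fintype ι] [Fintype κ]

noncomputable def blockCoupling (P : Measure X) (Q : Measure Y) (C : ι → Set X) (D : κ → Set Y)
    (M : ι → κ → ℝ≥0∞) : Measure (X × Y) :=
  ∑ i, ∑ j, M i j • (P[|C i]).prod (Q[|D j])

variable {P : Measure X} {Q : Measure Y} {C : ι → Set X} {D : κ → Set Y} {M : ι → κ → ℝ≥0∞}

theorem map_swap_blockCoupling :
    (blockCoupling P Q C D M).map Prod.swap = blockCoupling Q P D C fun j i => M i j := by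
  simp only [blockCoupling, Measure.map_finset_sum' measurable_swap.aemeasurable,
    Measure.map_smul, Measure.prod_swap]
  exact sum_comm

theorem map_fst_blockCoupling [IsFiniteMeasure P] [IsFiniteMeasure Q]
    (hC : IsMeasurablePartition C) (hrow : ∀ i, ∑ j, M i j = P (C i))
    (hcol : ∀ j, ∑ i, M i j = Q (D j)) :
    (blockCoupling P Q C D M).map Prod.fst = P := by
  have hM : ∀ i j, M i j * Q[|D j] univ = M i j := fun i j => by
    by_cases hQ : Q (D j) = 0
    · simp [le_zero_iff.mp (hQ ▸ hcol j ▸ single_le_sum (by simp) (mem_univ i))]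
    · have := cond_isProbabilityMeasure (μ := Q) hQ
      simp
  simp only [blockCoupling, Measure.map_finset_sum' measurable_fst.aemeasurable,
    Measure.map_smul, Measure.map_fst_prod, smul_smul, hM, ← sum_smul, hrow, measure_smul_cond,
    hC.sum_restrict]

theorem map_snd_blockCoupling [IsFiniteMeasure P] [IsFiniteMeasure Q]
    (hD : IsMeasurablePartition D) (hrow : ∀ i, ∑ j, M i j = P (C i))
    (hcol : ∀ j, ∑ i, M i j = Q (D j)) :
    (blockCoupling P Q C D M).map Prod.snd = Q := by
  rw [show (Prod.snd : X × Y → Y) = Prod.fst ∘ Prod.swap from rfl,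
    ← Measure.map_map measurable_fst measurable_swap, map_swap_blockCoupling,
    map_fst_blockCoupling hD hcol hrow]

theorem prod_cond_apply_eq_zero_of_disjoint {s : Set X} {t : Set Y} (hs : MeasurableSet s)
    (ht : MeasurableSet t) {E : Set (X × Y)} (hE : Disjoint (s ×ˢ t) E) :
    (P[|s]).prod (Q[|t]) E = 0 := by
  refine measure_mono_null hE.subset_compl_left ?_
  rw [compl_prod_eq_union]
  refine measure_union_null ?_ ?_ <;> simp [Measure.prod_prod, cond_apply, hs, ht]

theorem blockCoupling_apply_le (hC : ∀ i, MeasurableSet (C i)) (hD : ∀ j, MeasurableSet (D j))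
    (R : ι → κ → Prop) [DecidableRel R] {E : Set (X × Y)}
    (hR : ∀ i j, R i j → Disjoint (C i ×ˢ D j) E) :
    blockCoupling P Q C D M E ≤ ∑ i, ∑ j, if R i j then 0 else M i j := by
  simp only [blockCoupling, Measure.coe_finsetSum, Measure.coe_smul, Finset.sum_apply,
    Pi.smul_apply, smul_eq_mul]
  gcongr with i _ j _
  split_ifs with h
  · simp [prod_cond_apply_eq_zero_of_disjoint (hC i) (hD j) (hR i j h)]
  · calc M i j * (P[|C i]).prod (Q[|D j]) E ≤ M i j * 1 := by
          gcongr
          calc _ ≤ (P[|C i]).prod (Q[|D j]) univ := measure_mono (subset_univ E)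
            _ ≤ 1 := by
              rw [← univ_prod_univ, Measure.prod_prod]
              exact mul_le_one' prob_le_one prob_le_one
      _ = M i j := mul_one _

theorem exists_coupling_measure_le_of_hall_add [IsProbabilityMeasure P] [IsProbabilityMeasure Q]
    (hC : IsMeasurablePartition C) (hD : IsMeasurablePartition D) (R : ι → κ → Prop)
    [DecidableRel R] {E : Set (X × Y)} (hR : ∀ i j, R i j → Disjoint (C i ×ˢ D j) E)
    {s : ℝ≥0∞} (hs : s ≠ ∞) {θ : ℝ} (hθ : 0 < θ)
    (hall : ∀ K : Finset ι, ∑ i ∈ K, P (C i) ≤ ∑ j with ∃ i ∈ K, R i j, Q (D j) + s) :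
    ∃ μ : Measure (X × Y), μ.map Prod.fst = P ∧ μ.map Prod.snd = Q ∧
      μ E ≤ s + ENNReal.ofReal θ := by
  have hmass : ∑ i, (P (C i)).toReal = ∑ j, (Q (D j)).toReal := by
    rw [← ENNReal.toReal_sum fun _ _ => measure_ne_top _ _, hC.sum_measure,
      ← ENNReal.toReal_sum fun _ _ => measure_ne_top _ _, hD.sum_measure]
    simp
  have hall_real : ∀ K : Finset ι, ∑ i ∈ K, (P (C i)).toReal ≤
      ∑ j with ∃ i ∈ K, R i j, (Q (D j)).toReal + s.toReal := fun K => by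
    have := ENNReal.toReal_mono (by simp [hs]) (hall K)
    rwa [ENNReal.toReal_add (ENNReal.sum_ne_top.mpr fun _ _ => measure_ne_top _ _) hs,
      ENNReal.toReal_sum fun _ _ => measure_ne_top _ _,
      ENNReal.toReal_sum fun _ _ => measure_ne_top _ _] at this
  obtain ⟨M, hM0, hMrow, hMcol, hMbad⟩ := exists_transport_of_hall_add _ _ R
    (fun _ => ENNReal.toReal_nonneg) (fun _ => ENNReal.toReal_nonneg) hmass hθ hall_real
  have hrow : ∀ i, ∑ j, ENNReal.ofReal (M i j) = P (C i) := fun i => by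
    rw [← ENNReal.ofReal_sum_of_nonneg fun j _ => hM0 i j, hMrow,
      ENNReal.ofReal_toReal (measure_ne_top _ _)]
  have hcol : ∀ j, ∑ i, ENNReal.ofReal (M i j) = Q (D j) := fun j => by
    rw [← ENNReal.ofReal_sum_of_nonneg fun i _ => hM0 i j, hMcol,
      ENNReal.ofReal_toReal (measure_ne_top _ _)]
  have hbad : ∀ i j, 0 ≤ if R i j then 0 else M i j := fun i j => by split_ifs <;> simp [hM0]
  refine ⟨blockCoupling P Q C D fun i j => ENNReal.ofReal (M i j),
    map_fst_blockCoupling hC hrow hcol, map_snd_blockCoupling hD hrow hcol, ?_⟩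
  calc _ ≤ ∑ i, ∑ j, if R i j then 0 else ENNReal.ofReal (M i j) :=
        blockCoupling_apply_le hC.measurableSet hD.measurableSet R hR
    _ = ENNReal.ofReal (∑ i, ∑ j, if R i j then 0 else M i j) := by
        rw [ENNReal.ofReal_sum_of_nonneg fun i _ => sum_nonneg fun j _ => hbad i j]
        simp_rw [ENNReal.ofReal_sum_of_nonneg fun j _ => hbad _ j, apply_ite ENNReal.ofReal,
          ENNReal.ofReal_zero]
    _ ≤ ENNReal.ofReal (s.toReal + θ) := ENNReal.ofReal_le_ofReal hMbad
    _ = s + ENNReal.ofReal θ := by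
        rw [ENNReal.ofReal_add ENNReal.toReal_nonneg hθ.le, ENNReal.ofReal_toReal hs]

end BlockCoupling

section Metric

open Metric

variable {S : Type*} [PseudoMetricSpace S] [MeasurableSpace S]

theorem exists_measurablePartition_dist_le [OpensMeasurableSpace S]
    [TopologicalSpace.SeparableSpace S] (P Q : Measure S) [IsFiniteMeasure P] [IsFiniteMeasure Q]
    {ρ : ℝ} (hρ : 0 < ρ) {η : ℝ≥0∞} (hη : 0 < η) :
    ∃ (N : ℕ) (C : Option (Fin N) → Set S), IsMeasurablePartition C ∧ P (C none) ≤ η ∧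
      Q (C none) ≤ η ∧ ∀ k, ∀ x ∈ C (some k), ∀ y ∈ C (some k), dist x y ≤ ρ := by
  obtain ⟨A, hA_meas, hA_bdd, hA_diam, hA_cover, hA_disj⟩ :=
    SeparableSpace.exists_measurable_partition_diam_le S hρ
  have hacc_meas : ∀ n, MeasurableSet (accumulate A n) := fun n =>
    MeasurableSet.biUnion (to_countable _) fun k _ => hA_meas k
  have htail : ∀ μ : Measure S, IsFiniteMeasure μ → ∀ᶠ n in atTop, μ (accumulate A n)ᶜ < η :=
    fun μ _ => by
      have := tendsto_measure_iInter_atTop (μ := μ)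
        (fun n => (hacc_meas n).compl.nullMeasurableSet)
        (fun _ _ h => compl_subset_compl.mpr (monotone_accumulate h)) ⟨0, measure_ne_top _ _⟩
      rw [← compl_iUnion, iUnion_accumulate, hA_cover, compl_univ, measure_empty] at this
      exact (tendsto_order.1 this).2 η hη
  obtain ⟨N, hPN, hQN⟩ := ((htail P inferInstance).and (htail Q inferInstance)).exists
  have hA_sub : ∀ k : Fin (N + 1), A k ⊆ accumulate A N := fun k =>
    subset_accumulate.trans (monotone_accumulate (Nat.lt_succ_iff.mp k.isLt))
  refine ⟨N + 1, fun o => o.elim (accumulate A N)ᶜ fun k => A k, ⟨?_, ?_, ?_⟩, hPN.le, hQN.le,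
    fun k x hx y hy => (dist_le_diam_of_mem (hA_bdd k) hx hy).trans (hA_diam k)⟩
  · rintro (_ | k)
    exacts [(hacc_meas N).compl, hA_meas k]
  · rintro (_ | k) (_ | l) hkl
    · exact absurd rfl hkl
    · exact disjoint_compl_left.mono_right (hA_sub l)
    · exact disjoint_compl_right.mono_left (hA_sub k)
    · exact hA_disj fun h => hkl (congrArg some (Fin.val_injective h))
  · refine eq_univ_of_forall fun x => ?_
    by_cases hx : x ∈ accumulate A N
    · obtain ⟨k, hk, hxk⟩ := mem_accumulate.mp hx
      exact mem_iUnion.mpr ⟨some ⟨k, Nat.lt_succ_of_le hk⟩, hxk⟩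
    · exact mem_iUnion.mpr ⟨none, hx⟩

theorem sum_measure_le_of_levyProkhorovEDist_lt {P Q : Measure S} {N : ℕ}
    {C : Option (Fin N) → Set S} (hC : IsMeasurablePartition C) {c η : ℝ≥0∞}
    (hc : levyProkhorovEDist P Q < c) (hP : P (C none) ≤ η) (hQ : Q (C none) ≤ η)
    (R : Option (Fin N) → Option (Fin N) → Prop) [DecidableRel R]
    (hR : ∀ k l, (∃ x ∈ C (some k), ∃ y ∈ C (some l), dist x y < c.toReal) →
      R (some k) (some l))
    (K : Finset (Option (Fin N))) :
    ∑ i ∈ K, P (C i) ≤ ∑ j with ∃ i ∈ K, R i j, Q (C j) + (c + 2 * η) := by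
  -- The remainder cell may be unbounded: it is removed before thickening and charged to the slack.
  set V := (⋃ i ∈ K, C i) \ C none
  have hV : MeasurableSet V :=
    (K.measurableSet_biUnion fun i _ => hC.measurableSet i).diff (hC.measurableSet none)
  have hthick : thickening c.toReal V ⊆
      (⋃ j ∈ ({j | ∃ i ∈ K, R i j} : Finset _), C j) ∪ C none := by
    intro x hx
    obtain ⟨j, hxj⟩ := mem_iUnion.mp (hC.iUnion_eq_univ ▸ mem_univ x)
    obtain ⟨u, ⟨hu, hu_none⟩, hux⟩ := mem_thickening_iff.mp hx
    obtain ⟨i, hiK, hui⟩ := mem_iUnion₂.mp hu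
    cases j with
    | none => exact Or.inr hxj
    | some l =>
      cases i with
      | none => exact absurd hui hu_none
      | some k =>
        refine Or.inl (mem_iUnion₂.mpr ⟨some l, ?_, hxj⟩)
        simpa using ⟨some k, hiK, hR k l ⟨u, hui, x, hxj, by rwa [dist_comm]⟩⟩
  calc ∑ i ∈ K, P (C i) = P (⋃ i ∈ K, C i) := (hC.measure_biUnion_finset P K).symm
    _ ≤ P V + P (C none) :=
        (measure_mono (sdiff_union_self.symm ▸ subset_union_left)).trans (measure_union_le _ _)
    _ ≤ Q (thickening c.toReal V) + c + η := by
        gcongr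
        exact left_measure_le_of_levyProkhorovEDist_lt hc hV
    _ ≤ ∑ j with ∃ i ∈ K, R i j, Q (C j) + η + c + η := by
        gcongr
        refine (measure_mono hthick).trans ((measure_union_le _ _).trans ?_)
        rw [hC.measure_biUnion_finset]
        gcongr
    _ = _ := by ring

theorem exists_coupling_measure_le_of_levyProkhorovDist_lt [OpensMeasurableSpace S]
    [TopologicalSpace.SeparableSpace S] (P Q : Measure S) [IsProbabilityMeasure P]
    [IsProbabilityMeasure Q] {r : ℝ} (hr : levyProkhorovDist P Q < r) :
    ∃ μ : Measure (S × S), μ.map Prod.fst = P ∧ μ.map Prod.snd = Q ∧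
      μ {p | r ≤ dist p.1 p.2} ≤ ENNReal.ofReal r := by
  classical
  set α := levyProkhorovDist P Q
  have hα : 0 ≤ α := ENNReal.toReal_nonneg
  set δ := r - α
  have hδ : 0 < δ := sub_pos.mpr hr
  -- With `t = α + δ / 4`, cells that come within `t` of each other are closer than
  -- `t + 2 (δ / 4) < r`, and the mass left off `R` is at most `t + 2 (δ / 8) + δ / 8 < r`.
  obtain ⟨N, C, hC, hP, hQ, hdiam⟩ := exists_measurablePartition_dist_le P Q (ρ := δ / 4)
    (by positivity) (η := ENNReal.ofReal (δ / 8)) (ENNReal.ofReal_pos.mpr (by positivity))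
  have hc : levyProkhorovEDist P Q < ENNReal.ofReal (α + δ / 4) := by
    rw [← ENNReal.ofReal_toReal (levyProkhorovEDist_ne_top P Q),
      ENNReal.ofReal_lt_ofReal_iff (by positivity)]
    exact lt_add_of_pos_right _ (by positivity)
  let R : Option (Fin N) → Option (Fin N) → Prop := fun i j => ∀ x ∈ C i, ∀ y ∈ C j, dist x y < r
  have hR : ∀ k l, (∃ x ∈ C (some k), ∃ y ∈ C (some l),
      dist x y < (ENNReal.ofReal (α + δ / 4)).toReal) → R (some k) (some l) := by
    rintro k l ⟨x, hx, y, hy, hxy⟩ x' hx' y' hy'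
    rw [ENNReal.toReal_ofReal (by positivity)] at hxy
    calc dist x' y' ≤ dist x' x + dist x y + dist y y' := dist_triangle4 _ _ _ _
      _ < r := by linarith [hdiam k x' hx' x hx, hdiam l y hy y' hy']
  obtain ⟨μ, h1, h2, hμ⟩ := exists_coupling_measure_le_of_hall_add hC hC R
    (E := {p | r ≤ dist p.1 p.2})
    (fun i j hij => disjoint_left.mpr fun p ⟨hp1, hp2⟩ hp => (hij p.1 hp1 p.2 hp2).not_ge hp)
    (by finiteness) (θ := δ / 8) (by positivity)
    (sum_measure_le_of_levyProkhorovEDist_lt hC hc hP hQ R hR)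
  refine ⟨μ, h1, h2, hμ.trans ?_⟩
  calc _ = ENNReal.ofReal (α + δ / 4 + 2 * (δ / 8) + δ / 8) := by
        rw [← ENNReal.ofReal_ofNat 2, ← ENNReal.ofReal_mul zero_le_two,
          ← ENNReal.ofReal_add (by positivity) (by positivity),
          ← ENNReal.ofReal_add (by positivity) (by positivity)]
    _ ≤ ENNReal.ofReal r := ENNReal.ofReal_le_ofReal (by linarith)

end Metric

/-- The Lévy–Prokhorov distance equals the infimum over couplings `μ` of `P` and `Q`
of `inf {ε > 0 : μ{(x,y) : d(x,y) ≥ ε} ≤ ε}`. -/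
theorem stmt1 {S : Type*} [MeasurableSpace S] [MetricSpace S] [BorelSpace S]
    [TopologicalSpace.SeparableSpace S]
    (P Q : Measure S) [IsProbabilityMeasure P] [IsProbabilityMeasure Q] :
    levyProkhorovDist P Q =
      sInf {r : ℝ | ∃ μ : Measure (S × S), IsProbabilityMeasure μ ∧
        μ.map Prod.fst = P ∧ μ.map Prod.snd = Q ∧
        r = sInf {ε : ℝ | 0 < ε ∧ (μ {p : S × S | ε ≤ dist p.1 p.2}).toReal ≤ ε}} := by
  symm
  refine csInf_eq_of_forall_ge_of_forall_gt_exists_lt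
    ⟨_, P.prod Q, inferInstance, by simp, by simp, rfl⟩ ?_ ?_
  · rintro _ ⟨μ, hμ, rfl, rfl, rfl⟩
    exact levyProkhorovDist_map_le_kyFanDist measurable_fst measurable_snd
  · intro w hw
    obtain ⟨r, hr, hrw⟩ := exists_between hw
    obtain ⟨μ, rfl, rfl, hμ⟩ := exists_coupling_measure_le_of_levyProkhorovDist_lt P Q hr
    have := Measure.isProbabilityMeasure_of_map (μ := μ) Prod.fst
    refine ⟨_, ⟨μ, this, rfl, rfl, rfl⟩, ?_⟩
    exact (kyFanDist_le_of_measure_le (ENNReal.toReal_nonneg.trans_lt hr) hμ).trans_lt hrw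
end

section
/- Given any continuous path α : [0,1] → P(S) (with the weak topology) and ε > 0, there exists a polygonal path β : [0,1] → P(S) with vertices at finitely supported measures such that sup_{t ∈ [0,1]} q(α(t), β(t)) < ε. -/
open MeasureTheory Filter Topology Set
open scoped ENNReal NNReal

/-!
Put the vertices at the uniform nodes `j / (n + 1)`. As `α` is uniformly continuous on `[0, 1]`,
for `n` large every `α s` is Lévy–Prokhorov close to `α` at both ends of the segment containing
`s`. Each `α (j / (n + 1))` is replaced by a finitely supported measure: a separable space is
partitioned by countably many sets of small radius, finitely many of them carry all but a small
part of the mass, and the mass of each is moved to its centre. Finally, the Lévy–Prokhorov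
distance from a fixed measure to a convex combination of two probability measures is at most the
larger of the two distances, because the defining inequality `ν B ≤ μ (B^ε) + ε` is preserved
under mixing.
-/

open Metric

def tent (x : ℝ) : ℝ := max 0 (1 - |x|)

section Tent

variable {x : ℝ} {k : ℕ}

lemma tent_sub_of_mem_Icc (hx : x ∈ Icc (k : ℝ) (k + 1)) : tent (x - k) = k + 1 - x := by
  rw [tent, abs_of_nonneg (by linarith [hx.1]), max_eq_right (by linarith [hx.2])]
  ring

lemma tent_sub_add_one_of_mem_Icc (hx : x ∈ Icc (k : ℝ) (k + 1)) :
    tent (x - (k + 1)) = x - k := by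
  rw [tent, abs_of_nonpos (by linarith [hx.2]), max_eq_right (by linarith [hx.1])]
  ring

lemma tent_sub_eq_zero_of_mem_Icc (hx : x ∈ Icc (k : ℝ) (k + 1)) {j : ℕ} (hjk : j ≠ k)
    (hjk' : j ≠ k + 1) : tent (x - j) = 0 := by
  refine max_eq_left (sub_nonpos.mpr ?_)
  rcases Nat.lt_or_gt_of_ne hjk with hj | hj
  · have : (j : ℝ) + 1 ≤ k := by exact_mod_cast hj
    exact le_abs.mpr (Or.inl (by linarith [hx.1]))
  · have : (k : ℝ) + 2 ≤ j := by exact_mod_cast (show k + 2 ≤ j by omega)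
    exact le_abs.mpr (Or.inr (by linarith [hx.2]))

end Tent

lemma exists_fin_mem_Icc {n : ℕ} {x : ℝ} (hx : x ∈ Icc (0 : ℝ) (n + 1)) :
    ∃ i : Fin (n + 1), x ∈ Icc (i : ℝ) (i + 1) := by
  refine ⟨⟨min n ⌊x⌋₊, by omega⟩, ?_, ?_⟩
  · exact (Nat.cast_le.mpr (min_le_right _ _)).trans (Nat.floor_le hx.1)
  · rcases le_total ⌊x⌋₊ n with h | h
    · simpa [min_eq_right h] using (Nat.lt_floor_add_one x).le
    · simpa [min_eq_left h] using hx.2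

section Measures

variable {S : Type*} [MeasurableSpace S]

lemma isProbabilityMeasure_smul_add_smul (μ₀ μ₁ : Measure S) [IsProbabilityMeasure μ₀]
    [IsProbabilityMeasure μ₁] {a b : ℝ≥0∞} (hab : a + b = 1) :
    IsProbabilityMeasure (a • μ₀ + b • μ₁) :=
  ⟨by simp [hab]⟩

lemma isProbabilityMeasure_sum_smul_dirac {ι : Type*} [Fintype ι] {c : ι → ℝ≥0∞} {a : ι → S}
    (hc : ∑ i, c i = 1) : IsProbabilityMeasure (∑ i, c i • Measure.dirac (a i)) :=
  ⟨by simp [hc]⟩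

lemma exists_measure_compl_iUnion_fin_lt (μ : Measure S) [IsFiniteMeasure μ] {A : ℕ → Set S}
    (hA : ∀ j, MeasurableSet (A j)) (hcover : ⋃ j, A j = univ) {η : ℝ≥0∞} (hη : 0 < η) :
    ∃ N, μ (⋃ j : Fin N, A j)ᶜ < η := by
  have hanti : Antitone fun N => (⋃ j : Fin N, A j)ᶜ := fun N M hNM =>
    compl_subset_compl.mpr <|
      iUnion_subset fun j => subset_iUnion_of_subset (Fin.castLE hNM j) le_rfl
  have hempty : ⋂ N, (⋃ j : Fin N, A j)ᶜ = ∅ := by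
    refine eq_empty_of_forall_notMem fun x hx => ?_
    obtain ⟨j, hj⟩ := mem_iUnion.mp (hcover.symm ▸ mem_univ x : x ∈ ⋃ j, A j)
    exact mem_iInter.mp hx (j + 1) (mem_iUnion.mpr ⟨⟨j, j.lt_succ_self⟩, hj⟩)
  have := tendsto_measure_iInter_atTop
    (fun N => (MeasurableSet.iUnion fun j : Fin N => hA j).compl.nullMeasurableSet) hanti
    ⟨0, measure_ne_top μ _⟩
  rw [hempty, measure_empty] at this
  exact (this.eventually (gt_mem_nhds hη)).exists

-- The tents at `j` and `j + 1` are the barycentric weights on `[j, j + 1]`, and all others vanish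
-- there, so this is the polygonal path through the `ν j` placed at the nodes `j / (n + 1)`.
noncomputable def polygonalInterp (n : ℕ) (ν : Fin (n + 2) → Measure S) (s : ℝ) : Measure S :=
  ∑ j : Fin (n + 2), ENNReal.ofReal (tent (s * (n + 1) - (j : ℕ))) • ν j

lemma polygonalInterp_eq {n : ℕ} (ν : Fin (n + 2) → Measure S) {s : ℝ} (i : Fin (n + 1))
    (hs : s * (n + 1) ∈ Icc (i : ℝ) (i + 1)) :
    polygonalInterp n ν s = ENNReal.ofReal (i + 1 - s * (n + 1)) • ν i.castSucc
      + ENNReal.ofReal (s * (n + 1) - i) • ν i.succ := by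
  rw [polygonalInterp, Fintype.sum_eq_add i.castSucc i.succ (Fin.castSucc_lt_succ (i := i)).ne]
  · simp [tent_sub_of_mem_Icc hs, tent_sub_add_one_of_mem_Icc hs]
  · rintro j ⟨hj, hj'⟩
    rw [tent_sub_eq_zero_of_mem_Icc hs (fun h => hj (Fin.ext h)) (fun h => hj' (Fin.ext h)),
      ENNReal.ofReal_zero, zero_smul]

lemma isPolygonalWithVertices_polygonalInterp {n : ℕ} {ν : Fin (n + 2) → Measure S}
    {V : Set (Measure S)} (hν : ∀ j, ν j ∈ V) :
    IsPolygonalWithVertices (polygonalInterp n ν) V := by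
  have hn : (0 : ℝ) < n + 1 := by positivity
  refine ⟨n, fun j => (j : ℝ) / (n + 1), ν, fun i j hij => ?_, by simp, ?_, hν, fun i s hs => ?_⟩
  · exact div_lt_div_of_pos_right (Nat.cast_lt.mpr hij) hn
  · simp [div_self hn.ne']
  · simp only [Fin.val_castSucc, Fin.val_succ, Nat.cast_add, Nat.cast_one, mem_Icc,
      div_le_iff₀ hn, le_div_iff₀ hn] at hs ⊢
    rw [polygonalInterp_eq ν i hs]
    congr 3 <;> field_simp <;> ring

end Measures

section LevyProkhorov

variable {S : Type*} [MeasurableSpace S] [PseudoMetricSpace S]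

lemma measure_le_measure_thickening_add_of_levyProkhorovDist_lt {μ ν : Measure S}
    [IsFiniteMeasure μ] [IsFiniteMeasure ν] {ε : ℝ} (h : levyProkhorovDist μ ν < ε)
    {B : Set S} (hB : MeasurableSet B) :
    μ B ≤ ν (thickening ε B) + ENNReal.ofReal ε := by
  have hε : 0 < ε := ENNReal.toReal_nonneg.trans_lt h
  have := left_measure_le_of_levyProkhorovEDist_lt
    ((ENNReal.lt_ofReal_iff_toReal_lt (levyProkhorovEDist_ne_top μ ν)).mpr h) hB
  rwa [ENNReal.toReal_ofReal hε.le] at this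

variable [OpensMeasurableSpace S]

lemma LPContinuousOn.exists_pos_forall_levyProkhorovDist_lt {α : ℝ → Measure S} {A : Set ℝ}
    (hcont : LPContinuousOn α A) (hA : IsCompact A) (hfin : ∀ t ∈ A, IsFiniteMeasure (α t))
    {ε : ℝ} (hε : 0 < ε) :
    ∃ δ > 0, ∀ s ∈ A, ∀ t ∈ A, |s - t| < δ → levyProkhorovDist (α s) (α t) < ε := by
  have := isCompact_iff_compactSpace.mp hA
  let f : A → LevyProkhorov (FiniteMeasure S) := fun t =>
    LevyProkhorov.ofMeasure ⟨α t, hfin t t.2⟩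
  have hf : Continuous f := Metric.continuous_iff.mpr fun t ε hε => by
    obtain ⟨δ, hδ, h⟩ := hcont t t.2 ε hε
    exact ⟨δ, hδ, fun s hs => h s s.2 hs⟩
  obtain ⟨δ, hδ, h⟩ :=
    Metric.uniformContinuous_iff.mp (CompactSpace.uniformContinuous_of_continuous hf) ε hε
  exact ⟨δ, hδ, fun s hs t ht hst => h (a := ⟨s, hs⟩) (b := ⟨t, ht⟩) hst⟩

lemma levyProkhorovDist_smul_add_smul_le (ν μ₀ μ₁ : Measure S) [IsProbabilityMeasure ν]
    [IsProbabilityMeasure μ₀] [IsProbabilityMeasure μ₁] {a b : ℝ≥0∞} (hab : a + b = 1) :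
    levyProkhorovDist ν (a • μ₀ + b • μ₁)
      ≤ max (levyProkhorovDist ν μ₀) (levyProkhorovDist ν μ₁) := by
  have := isProbabilityMeasure_smul_add_smul μ₀ μ₁ hab
  refine levyProkhorovDist_le_of_forall_le _ _ (le_max_of_le_left ENNReal.toReal_nonneg)
    fun ε B hε hB => ?_
  have h₀ := measure_le_measure_thickening_add_of_levyProkhorovDist_lt
    ((le_max_left _ _).trans_lt hε) hB
  have h₁ := measure_le_measure_thickening_add_of_levyProkhorovDist_lt
    ((le_max_right _ _).trans_lt hε) hB
  calc ν B = a * ν B + b * ν B := by rw [← add_mul, hab, one_mul]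
    _ ≤ a * (μ₀ (thickening ε B) + ENNReal.ofReal ε)
        + b * (μ₁ (thickening ε B) + ENNReal.ofReal ε) := by gcongr
    _ = (a • μ₀ + b • μ₁) (thickening ε B) + (a + b) * ENNReal.ofReal ε := by
        simp only [Measure.add_apply, Measure.smul_apply, smul_eq_mul]
        ring
    _ = (a • μ₀ + b • μ₁) (thickening ε B) + ENNReal.ofReal ε := by rw [hab, one_mul]

lemma levyProkhorovDist_polygonalInterp_lt {n : ℕ} {ν : Fin (n + 2) → Measure S}
    [∀ j, IsProbabilityMeasure (ν j)] (ρ : Measure S) [IsProbabilityMeasure ρ] {s ε : ℝ}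
    (hs : s ∈ Icc (0 : ℝ) 1)
    (h : ∀ j : Fin (n + 2), |s * (n + 1) - (j : ℕ)| ≤ 1 → levyProkhorovDist ρ (ν j) < ε) :
    levyProkhorovDist ρ (polygonalInterp n ν s) < ε := by
  have hx : s * (n + 1) ∈ Icc (0 : ℝ) (n + 1) :=
    ⟨by positivity [hs.1], mul_le_of_le_one_left (by positivity) hs.2⟩
  obtain ⟨i, hi⟩ := exists_fin_mem_Icc hx
  have hab : ENNReal.ofReal (i + 1 - s * (n + 1)) + ENNReal.ofReal (s * (n + 1) - i) = 1 := by
    rw [← ENNReal.ofReal_add (by linarith [hi.2]) (by linarith [hi.1])]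
    simp
  rw [polygonalInterp_eq ν i hi]
  refine (levyProkhorovDist_smul_add_smul_le ρ _ _ hab).trans_lt (max_lt (h _ ?_) (h _ ?_))
  all_goals
    simp only [Fin.val_castSucc, Fin.val_succ, Nat.cast_add, Nat.cast_one, abs_le]
    constructor <;> linarith [hi.1, hi.2]

lemma levyProkhorovDist_le_of_subset_ball {ι : Type*} [Fintype ι]
    {μ ν : Measure S} [IsProbabilityMeasure μ] [IsProbabilityMeasure ν] {r : ℝ} (hr : 0 ≤ r)
    {A : ι → Set S} {x : ι → S} (hAx : ∀ i, A i ⊆ ball (x i) r)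
    (hν : ∑ i, μ (A i) • Measure.dirac (x i) ≤ ν) (hcompl : μ (⋃ i, A i)ᶜ ≤ ENNReal.ofReal r) :
    levyProkhorovDist μ ν ≤ r := by
  refine levyProkhorovDist_le_of_forall_le _ _ hr fun ε B hε _ => ?_
  have hpiece : ∀ i, μ (B ∩ A i) ≤ μ (A i) * Measure.dirac (x i) (thickening ε B) := by
    intro i
    rcases (B ∩ A i).eq_empty_or_nonempty with h | ⟨y, hyB, hyA⟩
    · simp [h]
    · have hx : x i ∈ thickening ε B := mem_thickening_iff.mpr
        ⟨y, hyB, by simpa [dist_comm] using (mem_ball.mp (hAx i hyA)).trans hε⟩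
      rw [Measure.dirac_apply_of_mem hx, mul_one]
      exact measure_mono inter_subset_right
  calc μ B ≤ μ (B ∩ ⋃ i, A i) + μ (B \ ⋃ i, A i) := measure_le_inter_add_sdiff μ B _
    _ ≤ ∑ i, μ (B ∩ A i) + μ (⋃ i, A i)ᶜ := by
        rw [inter_iUnion]
        gcongr
        · exact measure_iUnion_fintype_le μ _
        · exact sdiff_subset_compl _ _
    _ ≤ ν (thickening ε B) + ENNReal.ofReal ε := by
        gcongr ?_ + ?_
        · calc ∑ i, μ (B ∩ A i) ≤ ∑ i, μ (A i) * Measure.dirac (x i) (thickening ε B) :=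
                Finset.sum_le_sum fun i _ => hpiece i
            _ = (∑ i, μ (A i) • Measure.dirac (x i)) (thickening ε B) := by simp
            _ ≤ ν (thickening ε B) := Measure.le_iff'.mp hν _
        · exact hcompl.trans (ENNReal.ofReal_le_ofReal hε.le)

lemma exists_finitelySupported_levyProkhorovDist_lt [TopologicalSpace.SeparableSpace S]
    (μ : Measure S) [IsProbabilityMeasure μ] {δ : ℝ} (hδ : 0 < δ) :
    ∃ ν : Measure S, FinitelySupported ν ∧ IsProbabilityMeasure ν ∧
      levyProkhorovDist μ ν < δ := by
  have := nonempty_of_isProbabilityMeasure μ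
  obtain ⟨u, hu⟩ := TopologicalSpace.exists_dense_seq S
  set A := disjointed fun j => ball (u j) (δ / 2)
  have hA : ∀ j, MeasurableSet (A j) := MeasurableSet.disjointed fun j => measurableSet_ball
  have hcover : ⋃ j, A j = univ := by
    rw [iUnion_disjointed]
    exact eq_univ_of_forall fun y =>
      mem_iUnion.mpr ((hu.exists_dist_lt y (half_pos hδ)).imp fun j hj => mem_ball.mpr hj)
  obtain ⟨N, hN⟩ :=
    exists_measure_compl_iUnion_fin_lt μ hA hcover (ENNReal.ofReal_pos.mpr (half_pos hδ))
  set E := ⋃ j : Fin N, A j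
  let c : Fin (N + 1) → ℝ≥0∞ := Fin.cons (μ Eᶜ) fun j => μ (A j)
  let a : Fin (N + 1) → S := Fin.cons (u 0) fun j => u j
  have hc : ∑ j, c j = 1 := by
    have hE : ∑ j : Fin N, μ (A j) = μ E := by
      rw [measure_iUnion ((disjoint_disjointed _).comp_of_injective Fin.val_injective)
        fun j => hA j, tsum_fintype]
    simp only [Fin.sum_univ_succ, c, Fin.cons_zero, Fin.cons_succ, hE]
    rw [add_comm, measure_add_measure_compl (MeasurableSet.iUnion fun j : Fin N => hA j),
      measure_univ]
  have hν := isProbabilityMeasure_sum_smul_dirac (a := a) hc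
  refine ⟨_, ⟨N + 1, c, a, hc, rfl⟩, hν, ?_⟩
  refine (levyProkhorovDist_le_of_subset_ball (half_pos hδ).le
    (fun j : Fin N => disjointed_subset _ (j : ℕ)) ?_ hN.le).trans_lt (half_lt_self hδ)
  simp only [Fin.sum_univ_succ, c, a, Fin.cons_zero, Fin.cons_succ]
  exact Measure.le_add_left le_rfl

end LevyProkhorov

theorem stmt9_general {S : Type*} [MeasurableSpace S] [MetricSpace S] [BorelSpace S]
    [TopologicalSpace.SeparableSpace S]
    (α : ℝ → Measure S) (hprob : ∀ t ∈ Set.Icc (0 : ℝ) 1, IsProbabilityMeasure (α t))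
    (hcont : LPContinuousOn α (Set.Icc 0 1)) {ε : ℝ} (hε : 0 < ε) :
    ∃ β : ℝ → Measure S,
      IsPolygonalWithVertices β {μ | FinitelySupported μ ∧ IsProbabilityMeasure μ} ∧
      ∀ t ∈ Set.Icc (0 : ℝ) 1, levyProkhorovDist (α t) (β t) < ε := by
  obtain ⟨δ, hδ, hunif⟩ := hcont.exists_pos_forall_levyProkhorovDist_lt isCompact_Icc
    (fun t ht => have := hprob t ht; inferInstance) (half_pos hε)
  obtain ⟨n, hn⟩ := exists_nat_one_div_lt hδ
  have hn₀ : (0 : ℝ) < n + 1 := by positivity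
  have hnode : ∀ j : Fin (n + 2), ((j : ℕ) : ℝ) / (n + 1) ∈ Icc (0 : ℝ) 1 := fun j =>
    ⟨by positivity, (div_le_one hn₀).mpr (by exact_mod_cast j.is_le)⟩
  choose ν hν_supp hν_prob hν_close using fun j : Fin (n + 2) =>
    have := hprob _ (hnode j)
    exists_finitelySupported_levyProkhorovDist_lt (α (((j : ℕ) : ℝ) / (n + 1))) (half_pos hε)
  refine ⟨polygonalInterp n ν, isPolygonalWithVertices_polygonalInterp fun j =>
    ⟨hν_supp j, hν_prob j⟩, fun s hs => ?_⟩
  have := hprob s hs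
  refine levyProkhorovDist_polygonalInterp_lt (α s) hs fun j hj => ?_
  have := hprob _ (hnode j)
  have hsj : |s - ((j : ℕ) : ℝ) / (n + 1)| < δ := by
    rw [show s - ((j : ℕ) : ℝ) / (n + 1) = (s * (n + 1) - (j : ℕ)) / (n + 1) by field_simp,
      abs_div, abs_of_pos hn₀]
    exact (div_le_div_of_nonneg_right hj hn₀.le).trans_lt hn
  calc levyProkhorovDist (α s) (ν j)
      ≤ levyProkhorovDist (α s) (α _) + levyProkhorovDist (α _) (ν j) :=
        levyProkhorovDist_triangle _ _ _
    _ < ε / 2 + ε / 2 := add_lt_add (hunif s hs _ (hnode j) hsj) (hν_close j)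
    _ = ε := add_halves ε

/-- Every continuous path in `P(S)` can be uniformly `ε`-approximated (in Lévy–Prokhorov
distance) by a polygonal path with vertices at finitely supported probability measures. -/
theorem stmt9 {S : Type*} [MeasurableSpace S] [MetricSpace S] [BorelSpace S]
    [CompleteSpace S] [TopologicalSpace.SeparableSpace S]
    (α : ℝ → Measure S) (hprob : ∀ t ∈ Set.Icc (0 : ℝ) 1, IsProbabilityMeasure (α t))
    (hcont : LPContinuousOn α (Set.Icc 0 1)) {ε : ℝ} (hε : 0 < ε) :
    ∃ β : ℝ → Measure S,
      IsPolygonalWithVertices β {μ | FinitelySupported μ ∧ IsProbabilityMeasure μ} ∧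
      ∀ t ∈ Set.Icc (0 : ℝ) 1, levyProkhorovDist (α t) (β t) < ε :=
  stmt9_general α hprob hcont hε
end

section
/- Let X = Σᵢ aᵢ·1_{Aᵢ} and Y = Σᵢ aᵢ·1_{Bᵢ} be simple random variables over the same finite list of values a₁,…,a_m on a complete nonatomic probability space. Then there exists a continuous path α̂ : [0,1] → L⁰(Ω,S) (Ky Fan metric) with α̂(0) = X, α̂(1) = Y, and law(α̂(t)) = (1−t)·law(X) + t·law(Y) for all t ∈ [0,1]. -/
open MeasureTheory Filter Topology Set
open scoped ENNReal NNReal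

/-!
A nonatomic finite measure lets one split any measurable set `E` exactly: a greedy exhaustion
produces subsets of every prescribed measure. Splitting repeatedly at dyadic times gives an
increasing family `C t ⊆ E`, `t ∈ [0, 1]`, from `∅` to `E` with `P (C t) = t • P E`. Doing this
inside every cell `A i ∩ B j` yields an increasing family `G t` from `∅` to `Ω` that fills the
proportion `t` of each cell. The path is `Y` on `G t` and `X` off it. Since `X` and `Y` are
constant on cells, its law at time `t` is `(1 - t) • law X + t • law Y`; and the values at times
`s ≤ t` differ only on `G t \ G s`, a set of measure `t - s`, which gives Ky Fan continuity.
-/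

namespace Nonatomic

variable {Ω : Type*} [MeasurableSpace Ω] {P : Measure Ω} [IsFiniteMeasure P] {E : Set Ω}

lemma exists_subset_pos_le_half (hna : Nonatomic P) (hE : MeasurableSet E) (hpos : 0 < P E) :
    ∃ D ⊆ E, MeasurableSet D ∧ 0 < P D ∧ P D ≤ P E / 2 := by
  obtain ⟨B, hBE, hBm, hB0, hBlt⟩ := hna E hE hpos
  by_cases hB : P B ≤ P E / 2
  · exact ⟨B, hBE, hBm, hB0, hB⟩
  · have hdiff : P (E \ B) = P E - P B :=
      measure_sdiff hBE hBm.nullMeasurableSet (measure_ne_top P B)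
    refine ⟨E \ B, sdiff_subset, hE.diff hBm, hdiff ▸ tsub_pos_of_lt hBlt, ?_⟩
    calc P (E \ B) ≤ P E - P E / 2 := hdiff ▸ tsub_le_tsub_left (le_of_not_ge hB) _
      _ = P E / 2 := ENNReal.sub_half (measure_ne_top P E)

lemma exists_subset_pos_le (hna : Nonatomic P) (hE : MeasurableSet E) (hpos : 0 < P E)
    {ε : ℝ≥0∞} (hε : ε ≠ 0) : ∃ D ⊆ E, MeasurableSet D ∧ 0 < P D ∧ P D ≤ ε := by
  have halving : ∀ n : ℕ, ∃ D ⊆ E, MeasurableSet D ∧ 0 < P D ∧ P D ≤ P E * 2⁻¹ ^ n := by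
    intro n
    induction n with
    | zero => exact ⟨E, subset_rfl, hE, hpos, by simp⟩
    | succ n ih =>
      obtain ⟨D, hDE, hDm, hD0, hDle⟩ := ih
      obtain ⟨F, hFD, hFm, hF0, hFle⟩ := hna.exists_subset_pos_le_half hDm hD0
      refine ⟨F, hFD.trans hDE, hFm, hF0, hFle.trans ?_⟩
      rw [pow_succ, ← mul_assoc, ← div_eq_mul_inv]
      gcongr
  have hsmall : Tendsto (fun n : ℕ => P E * 2⁻¹ ^ n) atTop (𝓝 0) := by
    simpa using ENNReal.Tendsto.const_mul
      (ENNReal.tendsto_pow_atTop_nhds_zero_of_lt_one (by norm_num)) (Or.inr (measure_ne_top P E))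
  obtain ⟨n, hn⟩ := (hsmall.eventually (gt_mem_nhds (pos_iff_ne_zero.mpr hε))).exists
  obtain ⟨D, hDE, hDm, hD0, hDle⟩ := halving n
  exact ⟨D, hDE, hDm, hD0, hDle.trans hn.le⟩

lemma exists_subset_measure_eq (hna : Nonatomic P) (hE : MeasurableSet E) {r : ℝ≥0∞}
    (hr : r ≤ P E) : ∃ D ⊆ E, MeasurableSet D ∧ P D = r := by
  let Adm : Set (Set Ω) := {D | D ⊆ E ∧ MeasurableSet D ∧ P D ≤ r}
  let sup (D : Set Ω) : ℝ≥0∞ := sSup (P '' {D' | D' ∈ Adm ∧ D ⊆ D'})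
  have step : ∀ (n : ℕ) (D : Adm), ∃ D' : Adm, D.1 ⊆ D'.1 ∧ sup D ≤ P D' + 2⁻¹ ^ n := by
    intro n D
    rcases le_or_gt (sup D) (2⁻¹ ^ n) with hle | hlt
    · exact ⟨D, subset_rfl, le_add_left hle⟩
    have hfin : sup D ≠ ∞ := ne_top_of_le_ne_top (measure_ne_top P E) <|
      sSup_le <| by rintro _ ⟨D', hD', rfl⟩; exact measure_mono hD'.1.1
    obtain ⟨_, ⟨D', hD', rfl⟩, hD'lt⟩ := lt_sSup_iff.mp <|
      ENNReal.sub_lt_self hfin (pos_of_gt hlt).ne' (b := 2⁻¹ ^ n) (by simp)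
    exact ⟨⟨D', hD'.1⟩, hD'.2, tsub_le_iff_right.mp hD'lt.le⟩
  choose next hnext_sub hnext_sup using step
  let D : ℕ → Adm := fun n => Nat.rec ⟨∅, empty_subset _, .empty, by simp⟩ next n
  have hmono : Monotone fun n => (D n).1 := monotone_nat_of_le_succ fun n => hnext_sub n (D n)
  let L := ⋃ n, (D n).1
  have hLm : MeasurableSet L := .iUnion fun n => (D n).2.2.1
  have hPL : P L = ⨆ n, P (D n).1 := hmono.measure_iUnion
  have hDL : ∀ n, P (D n).1 ≤ P L := fun n => measure_mono (subset_iUnion (fun n => (D n).1) n)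
  refine ⟨L, iUnion_subset fun n => (D n).2.1, hLm,
    le_antisymm (hPL ▸ iSup_le fun n => (D n).2.2.2) ?_⟩
  by_contra! hLr
  obtain ⟨F, hFL, hFm, hF0, hFr⟩ := hna.exists_subset_pos_le (hE.diff hLm)
    (by rw [measure_sdiff (iUnion_subset fun n => (D n).2.1) hLm.nullMeasurableSet
      (measure_ne_top P L)]; exact tsub_pos_of_lt (hLr.trans_le hr))
    (tsub_pos_of_lt hLr).ne'
  -- `F` could be added to every `D n`, which contradicts the greedy choice in the limit.
  have hbound : ∀ n, P (D n).1 + P F ≤ P L + 2⁻¹ ^ n := by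
    intro n
    have hdisj : Disjoint (D n).1 F :=
      disjoint_left.mpr fun ω hω hωF => (hFL hωF).2 (mem_iUnion.mpr ⟨n, hω⟩)
    have hunion : P ((D n).1 ∪ F) = P (D n).1 + P F := measure_union hdisj hFm
    have hadm : (D n).1 ∪ F ∈ Adm := by
      refine ⟨union_subset (D n).2.1 (hFL.trans sdiff_subset), (D n).2.2.1.union hFm, ?_⟩
      calc P ((D n).1 ∪ F) = P (D n).1 + P F := hunion
        _ ≤ P L + (r - P L) := add_le_add (hDL n) hFr
        _ = r := add_tsub_cancel_of_le hLr.le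
    calc P (D n).1 + P F = P ((D n).1 ∪ F) := hunion.symm
      _ ≤ sup (D n).1 := le_sSup ⟨_, ⟨hadm, subset_union_left⟩, rfl⟩
      _ ≤ P (D (n + 1)).1 + 2⁻¹ ^ n := hnext_sup n (D n)
      _ ≤ P L + 2⁻¹ ^ n := add_le_add_left (hDL (n + 1)) _
  have hlim : P L + P F ≤ P L + 0 :=
    le_of_tendsto_of_tendsto' ((hPL ▸ tendsto_atTop_iSup fun _ _ h => measure_mono (hmono h)).add
      tendsto_const_nhds) (tendsto_const_nhds.add
        (ENNReal.tendsto_pow_atTop_nhds_zero_of_lt_one (by norm_num))) hbound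
  exact hF0.ne' (nonpos_iff_eq_zero.mp ((ENNReal.add_le_add_iff_left (measure_ne_top P L)).mp hlim))

lemma exists_between_measure_eq (hna : Nonatomic P) {D : Set Ω} (hDE : D ⊆ E)
    (hD : MeasurableSet D) (hE : MeasurableSet E) {r : ℝ≥0∞} (hDr : P D ≤ r) (hrE : r ≤ P E) :
    ∃ F, D ⊆ F ∧ F ⊆ E ∧ MeasurableSet F ∧ P F = r := by
  have hdiff : P (E \ D) = P E - P D := measure_sdiff hDE hD.nullMeasurableSet (measure_ne_top P D)
  obtain ⟨H, hHE, hHm, hHP⟩ := hna.exists_subset_measure_eq (hE.diff hD)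
    (r := r - P D) (hdiff ▸ tsub_le_tsub_right hrE _)
  refine ⟨D ∪ H, subset_union_left, union_subset hDE (hHE.trans sdiff_subset), hD.union hHm, ?_⟩
  rw [measure_union (disjoint_sdiff_right.mono_right hHE) hHm, hHP, add_tsub_cancel_of_le hDr]

end Nonatomic

structure IsDyadicChain {Ω : Type*} [MeasurableSpace Ω] (P : Measure Ω) (E : Set Ω) (n : ℕ)
    (g : ℕ → Set Ω) : Prop where
  mono : Monotone g
  subset : ∀ k, g k ⊆ E
  measurableSet : ∀ k, MeasurableSet (g k)
  zero : g 0 = ∅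
  top : g (2 ^ n) = E
  measure_eq : ∀ k ≤ 2 ^ n, P (g k) = ENNReal.ofReal (k / 2 ^ n) * P E

namespace IsDyadicChain

variable {Ω : Type*} [MeasurableSpace Ω] {P : Measure Ω} {E : Set Ω}

lemma zero_level (E : Set Ω) (hE : MeasurableSet E) :
    IsDyadicChain P E 0 fun k => if k = 0 then ∅ else E where
  mono k l hkl := by
    beta_reduce
    split_ifs <;> first | exact empty_subset _ | exact subset_rfl | omega
  subset k := by split_ifs <;> simp
  measurableSet k := by split_ifs <;> simp [hE]
  zero := rfl
  top := rfl
  measure_eq k hk := by interval_cases k <;> simp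

lemma exists_refine [IsFiniteMeasure P] (hna : Nonatomic P) {n : ℕ} {g : ℕ → Set Ω}
    (hg : IsDyadicChain P E n g) :
    ∃ g', IsDyadicChain P E (n + 1) g' ∧ ∀ k, g' (2 * k) = g k := by
  have hmid : ∀ k, ∃ F, g k ⊆ F ∧ F ⊆ g (k + 1) ∧ MeasurableSet F ∧
      (k < 2 ^ n → P F = ENNReal.ofReal ((2 * k + 1) / 2 ^ (n + 1)) * P E) := by
    intro k
    by_cases hk : k < 2 ^ n
    · have h2n : (0 : ℝ) < 2 ^ n := by positivity
      have hkn : (k : ℝ) + 1 ≤ 2 ^ n := by exact_mod_cast hk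
      obtain ⟨F, hgF, hFg, hFm, hFP⟩ := hna.exists_between_measure_eq (hg.mono k.le_succ)
        (hg.measurableSet k) (hg.measurableSet (k + 1))
        (r := ENNReal.ofReal ((2 * k + 1) / 2 ^ (n + 1)) * P E)
        (by
          rw [hg.measure_eq k hk.le]
          gcongr ENNReal.ofReal ?_ * _
          rw [pow_succ, div_le_div_iff₀ h2n (by positivity)]
          nlinarith)
        (by
          rw [hg.measure_eq (k + 1) hk]
          gcongr ENNReal.ofReal ?_ * _
          rw [pow_succ, div_le_div_iff₀ (by positivity) h2n]
          push_cast
          nlinarith)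
      exact ⟨F, hgF, hFg, hFm, fun _ => hFP⟩
    · exact ⟨g k, subset_rfl, hg.mono k.le_succ, hg.measurableSet k, fun h => absurd h hk⟩
  choose F hgF hFg hFm hFP using hmid
  set g' : ℕ → Set Ω := fun j => if j % 2 = 0 then g (j / 2) else F (j / 2)
  have heven : ∀ k, g' (2 * k) = g k := fun k => by simp [g']
  have hodd : ∀ k, g' (2 * k + 1) = F k := fun k => by
    simp [g', Nat.add_mod, show (2 * k + 1) / 2 = k by omega]
  refine ⟨g', ⟨?_, ?_, ?_, ?_, ?_, ?_⟩, heven⟩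
  · refine monotone_nat_of_le_succ fun j => ?_
    obtain ⟨k, rfl | rfl⟩ := j.even_or_odd'
    · rw [heven, hodd]; exact hgF k
    · rw [hodd, show 2 * k + 1 + 1 = 2 * (k + 1) by ring, heven]; exact hFg k
  · intro j
    obtain ⟨k, rfl | rfl⟩ := j.even_or_odd'
    · rw [heven]; exact hg.subset k
    · rw [hodd]; exact (hFg k).trans (hg.subset _)
  · intro j
    obtain ⟨k, rfl | rfl⟩ := j.even_or_odd'
    · rw [heven]; exact hg.measurableSet k
    · rw [hodd]; exact hFm k
  · exact (heven 0).trans hg.zero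
  · rw [pow_succ, mul_comm, heven, hg.top]
  · intro j hj
    obtain ⟨k, rfl | rfl⟩ := j.even_or_odd'
    · rw [heven, hg.measure_eq k (by omega)]
      congr 2
      push_cast
      field_simp
      ring
    · rw [hodd, hFP k (by omega)]
      push_cast
      rfl

lemma exists_seq [IsFiniteMeasure P] (hna : Nonatomic P) (hE : MeasurableSet E) :
    ∃ g : ℕ → ℕ → Set Ω, (∀ n, IsDyadicChain P E n (g n)) ∧ ∀ n k, g (n + 1) (2 * k) = g n k := by
  have step : ∀ n (g : {g // IsDyadicChain P E n g}),
      ∃ g' : {g' // IsDyadicChain P E (n + 1) g'}, ∀ k, g'.1 (2 * k) = g.1 k := fun n g => by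
    obtain ⟨g', hg', hrefine⟩ := g.2.exists_refine hna
    exact ⟨⟨g', hg'⟩, hrefine⟩
  choose next hnext using step
  let seq : ∀ n, {g // IsDyadicChain P E n g} := fun n => Nat.rec ⟨_, zero_level E hE⟩ next n
  exact ⟨fun n => (seq n).1, fun n => (seq n).2, fun n => hnext n (seq n)⟩

end IsDyadicChain

lemma two_mul_nat_floor_le_nat_floor_two_mul (x : ℝ) : 2 * ⌊x⌋₊ ≤ ⌊2 * x⌋₊ := by
  rcases le_or_gt 0 x with hx | hx
  · exact Nat.le_floor (by push_cast; linarith [Nat.floor_le hx])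
  · simp [Nat.floor_of_nonpos hx.le]

namespace Nonatomic

variable {Ω : Type*} [MeasurableSpace Ω] {P : Measure Ω} [IsFiniteMeasure P] {E : Set Ω}

lemma exists_monotone_measure_eq_mul (hna : Nonatomic P) (hE : MeasurableSet E) :
    ∃ C : ℝ → Set Ω, Monotone C ∧ (∀ t, C t ⊆ E) ∧ (∀ t, MeasurableSet (C t)) ∧ C 0 = ∅ ∧
      C 1 = E ∧ ∀ t ∈ Icc (0 : ℝ) 1, P (C t) = ENNReal.ofReal t * P E := by
  obtain ⟨g, hg, hrefine⟩ := IsDyadicChain.exists_seq hna hE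
  have hmono_n : ∀ t : ℝ, Monotone fun n => g n ⌊t * 2 ^ n⌋₊ := fun t =>
    monotone_nat_of_le_succ fun n => by
      rw [← hrefine]
      refine (hg (n + 1)).mono ?_
      rw [show t * 2 ^ (n + 1) = 2 * (t * 2 ^ n) by ring]
      exact two_mul_nat_floor_le_nat_floor_two_mul _
  have hfloor_pow : ∀ n : ℕ, ⌊(2 : ℝ) ^ n⌋₊ = 2 ^ n := fun n => by
    exact_mod_cast Nat.floor_natCast (R := ℝ) (2 ^ n)
  refine ⟨fun t => ⋃ n, g n ⌊t * 2 ^ n⌋₊, fun s t hst => iUnion_mono fun n => (hg n).mono ?_,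
    fun t => iUnion_subset fun n => (hg n).subset _,
    fun t => .iUnion fun n => (hg n).measurableSet _, by simp [(hg _).zero],
    by simp only [one_mul, hfloor_pow, (hg _).top, iUnion_const], fun t ht => ?_⟩
  · exact Nat.floor_le_floor (by gcongr)
  have hfloor_le : ∀ n, ⌊t * 2 ^ n⌋₊ ≤ 2 ^ n := fun n => by
    simpa [hfloor_pow] using Nat.floor_le_floor (mul_le_of_le_one_left (by positivity) ht.2 :
      t * 2 ^ n ≤ 2 ^ n)
  have hdyadic : Tendsto (fun n : ℕ => (⌊t * 2 ^ n⌋₊ : ℝ) / 2 ^ n) atTop (𝓝 t) :=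
    (tendsto_nat_floor_mul_div_atTop ht.1).comp
      (tendsto_pow_atTop_atTop_of_one_lt one_lt_two)
  refine tendsto_nhds_unique (tendsto_measure_iUnion_atTop (hmono_n t)) ?_
  refine (ENNReal.Tendsto.mul_const ((ENNReal.continuous_ofReal.tendsto t).comp hdyadic)
    (Or.inr (measure_ne_top P E))).congr fun n => ?_
  exact ((hg n).measure_eq _ (hfloor_le n)).symm

lemma exists_monotone_measure_inter_eq_mul (hna : Nonatomic P) {ι : Type*} [Countable ι]
    {E : ι → Set Ω} (hEm : ∀ k, MeasurableSet (E k))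
    (hEdisj : Pairwise (Function.onFun Disjoint E))
    (hEcover : ⋃ k, E k = univ) :
    ∃ G : ℝ → Set Ω, Monotone G ∧ (∀ t, MeasurableSet (G t)) ∧ G 0 = ∅ ∧ G 1 = univ ∧
      ∀ t ∈ Icc (0 : ℝ) 1, ∀ T : Set ι,
        P ((⋃ k ∈ T, E k) ∩ G t) = ENNReal.ofReal t * P (⋃ k ∈ T, E k) := by
  choose C hCmono hCsub hCm hC0 hC1 hCP using fun k => hna.exists_monotone_measure_eq_mul (hEm k)
  refine ⟨fun t => ⋃ k, C k t, fun s t hst => iUnion_mono fun k => hCmono k hst,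
    fun t => .iUnion fun k => hCm k t, by simp [hC0], by simp [hC1, hEcover], fun t ht T => ?_⟩
  have hinter : (⋃ k ∈ T, E k) ∩ ⋃ k, C k t = ⋃ k ∈ T, C k t := by
    ext ω
    simp only [mem_inter_iff, mem_iUnion, exists_prop]
    constructor
    · rintro ⟨⟨k, hkT, hωk⟩, l, hωl⟩
      obtain rfl : l = k := by
        by_contra hlk
        exact disjoint_left.mp (hEdisj hlk) (hCsub l t hωl) hωk
      exact ⟨l, hkT, hωl⟩
    · rintro ⟨k, hkT, hωk⟩
      exact ⟨⟨k, hkT, hCsub k t hωk⟩, k, hωk⟩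
  rw [hinter, measure_biUnion T.to_countable
      (fun k _ l _ hkl => (hEdisj hkl).mono (hCsub k t) (hCsub l t)) fun k _ => hCm k t,
    measure_biUnion T.to_countable (hEdisj.set_pairwise T) fun k _ => hEm k,
    ← ENNReal.tsum_mul_left]
  exact tsum_congr fun k => hCP k t ht

end Nonatomic

lemma preimage_eq_biUnion_of_forall_mem_eq {Ω ι β : Type*} {E : ι → Set Ω}
    (hEcover : ⋃ k, E k = univ) {f : Ω → β} {c : ι → β} (hf : ∀ k, ∀ ω ∈ E k, f ω = c k)
    (s : Set β) : f ⁻¹' s = ⋃ k ∈ c ⁻¹' s, E k := by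
  ext ω
  obtain ⟨k, hωk⟩ := mem_iUnion.mp (hEcover.symm ▸ mem_univ ω : ω ∈ ⋃ k, E k)
  simp only [mem_preimage, mem_iUnion, exists_prop]
  refine ⟨fun hω => ⟨k, hf k ω hωk ▸ hω, hωk⟩, fun ⟨l, hl, hωl⟩ => hf l ω hωl ▸ hl⟩

section Path

variable {Ω S : Type*} [MeasurableSpace Ω] {P : Measure Ω} [IsFiniteMeasure P]

lemma kyFanDist_le_of_measure_ne_le [PseudoMetricSpace S] {X Y : Ω → S} {ε : ℝ} (hε : 0 < ε)
    (h : (P {ω | X ω ≠ Y ω}).toReal ≤ ε) : kyFanDist P X Y ≤ ε := by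
  refine csInf_le ⟨0, fun _ hx => hx.1.le⟩ ⟨hε, le_trans ?_ h⟩
  refine ENNReal.toReal_mono (measure_ne_top _ _) (measure_mono fun ω hω hXY => ?_)
  replace hω : ε ≤ dist (X ω) (Y ω) := hω
  rw [hXY, dist_self] at hω
  linarith

lemma kyFanContinuousOn_of_measure_ne_le [PseudoMetricSpace S] {γ : ℝ → Ω → S} {A : Set ℝ}
    (h : ∀ s ∈ A, ∀ t ∈ A, P {ω | γ s ω ≠ γ t ω} ≤ ENNReal.ofReal |s - t|) :
    KyFanContinuousOn P γ A := by
  intro t ht ε hε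
  refine ⟨ε / 2, half_pos hε, fun s hs hst => ?_⟩
  have hle : (P {ω | γ s ω ≠ γ t ω}).toReal ≤ ε / 2 := by
    refine (ENNReal.toReal_mono ENNReal.ofReal_ne_top (h s hs t ht)).trans ?_
    rw [ENNReal.toReal_ofReal (abs_nonneg _)]
    exact hst.le
  linarith [kyFanDist_le_of_measure_ne_le (half_pos hε) hle]

lemma kyFanContinuousOn_piecewise [PseudoMetricSpace S] {G : ℝ → Set Ω} (hGmono : Monotone G)
    [∀ t, DecidablePred (· ∈ G t)] (hGm : ∀ t, MeasurableSet (G t))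
    (hGP : ∀ t ∈ Icc (0 : ℝ) 1, P (G t) = ENNReal.ofReal t)
    (X Y : Ω → S) : KyFanContinuousOn P (fun t => (G t).piecewise Y X) (Icc 0 1) := by
  refine kyFanContinuousOn_of_measure_ne_le fun s hs t ht => ?_
  wlog hst : s ≤ t generalizing s t
  · simpa only [ne_comm, abs_sub_comm] using this t ht s hs (le_of_not_ge hst)
  have hsub : {ω | (G s).piecewise Y X ω ≠ (G t).piecewise Y X ω} ⊆ G t \ G s := by
    refine fun ω hω => ⟨by_contra fun hωt => hω ?_, fun hωs => hω ?_⟩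
    · rw [piecewise_eq_of_notMem _ _ _ hωt,
        piecewise_eq_of_notMem _ _ _ fun hωs => hωt (hGmono hst hωs)]
    · rw [piecewise_eq_of_mem _ _ _ hωs, piecewise_eq_of_mem _ _ _ (hGmono hst hωs)]
  calc P {ω | (G s).piecewise Y X ω ≠ (G t).piecewise Y X ω} ≤ P (G t \ G s) := measure_mono hsub
    _ = ENNReal.ofReal |s - t| := by
      rw [measure_sdiff (hGmono hst) (hGm s).nullMeasurableSet (measure_ne_top _ _), hGP t ht,
        hGP s hs, ← ENNReal.ofReal_sub _ hs.1, abs_sub_comm, abs_of_nonneg (sub_nonneg.2 hst)]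

lemma map_piecewise_eq_of_measure_inter [MeasurableSpace S] {X Y : Ω → S} (hX : Measurable X)
    (hY : Measurable Y) {G : Set Ω} [DecidablePred (· ∈ G)]
    (hG : MeasurableSet G) {t : ℝ} (ht : 0 ≤ t)
    (hXG : ∀ s, MeasurableSet s → P (X ⁻¹' s ∩ G) = ENNReal.ofReal t * P (X ⁻¹' s))
    (hYG : ∀ s, MeasurableSet s → P (Y ⁻¹' s ∩ G) = ENNReal.ofReal t * P (Y ⁻¹' s)) :
    P.map (G.piecewise Y X) = ENNReal.ofReal (1 - t) • P.map X + ENNReal.ofReal t • P.map Y := by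
  ext s hs
  have hXdiff : P (X ⁻¹' s \ G) = ENNReal.ofReal (1 - t) * P (X ⁻¹' s) := by
    rw [ENNReal.ofReal_sub _ ht, ENNReal.ofReal_one, ENNReal.sub_mul fun _ _ => measure_ne_top _ _,
      one_mul, ← hXG s hs, ← measure_inter_add_sdiff (X ⁻¹' s) hG,
      ENNReal.add_sub_cancel_left (measure_ne_top _ _)]
  rw [Measure.map_apply (Measurable.piecewise hG hY hX) hs, piecewise_preimage, Set.ite,
    measure_union (disjoint_sdiff_right.mono_left inter_subset_right) ((hX hs).diff hG),
    hYG s hs, hXdiff, Measure.add_apply, Measure.smul_apply, Measure.smul_apply,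
    Measure.map_apply hX hs, Measure.map_apply hY hs, smul_eq_mul, smul_eq_mul, add_comm]

end Path

theorem stmt10_general {Ω S : Type*} [MeasurableSpace Ω] [MeasurableSpace S] [MetricSpace S]
    (P : Measure Ω) [IsProbabilityMeasure P] (hna : Nonatomic P)
    {m : ℕ} (a : Fin m → S) (A B : Fin m → Set Ω)
    (hAm : ∀ i, MeasurableSet (A i)) (hBm : ∀ i, MeasurableSet (B i))
    (hAdisj : Pairwise (Function.onFun Disjoint A)) (hAcover : (⋃ i, A i) = Set.univ)
    (hBdisj : Pairwise (Function.onFun Disjoint B)) (hBcover : (⋃ i, B i) = Set.univ)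
    (X Y : Ω → S) (hXval : ∀ i, ∀ ω ∈ A i, X ω = a i) (hYval : ∀ i, ∀ ω ∈ B i, Y ω = a i) :
    ∃ αhat : ℝ → Ω → S,
      (∀ t ∈ Set.Icc (0 : ℝ) 1, Measurable (αhat t)) ∧
      KyFanContinuousOn P αhat (Set.Icc 0 1) ∧
      αhat 0 = X ∧ αhat 1 = Y ∧
      ∀ t ∈ Set.Icc (0 : ℝ) 1,
        P.map (αhat t) = ENNReal.ofReal (1 - t) • P.map X + ENNReal.ofReal t • P.map Y := by
  classical
  let E : Fin m × Fin m → Set Ω := fun k => A k.1 ∩ B k.2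
  have hEm : ∀ k, MeasurableSet (E k) := fun k => (hAm k.1).inter (hBm k.2)
  have hEdisj : Pairwise (Function.onFun Disjoint E) := by
    rintro ⟨i, j⟩ ⟨i', j'⟩ hne
    by_cases hi : i = i'
    · subst hi
      exact (hBdisj fun hj => hne (Prod.ext rfl hj)).mono inter_subset_right inter_subset_right
    · exact (hAdisj hi).mono inter_subset_left inter_subset_left
  have hEcover : ⋃ k, E k = univ := by
    rw [iUnion_prod', ← iUnion_inter_iUnion, hAcover, hBcover, univ_inter]
  have hXpre := preimage_eq_biUnion_of_forall_mem_eq hEcover (c := fun k => a k.1)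
    fun k ω hω => hXval k.1 ω hω.1
  have hYpre := preimage_eq_biUnion_of_forall_mem_eq hEcover (c := fun k => a k.2)
    fun k ω hω => hYval k.2 ω hω.2
  have hX : Measurable X := fun s _ => hXpre s ▸ .biUnion (to_countable _) fun k _ => hEm k
  have hY : Measurable Y := fun s _ => hYpre s ▸ .biUnion (to_countable _) fun k _ => hEm k
  obtain ⟨G, hGmono, hGm, hG0, hG1, hGP⟩ :=
    hna.exists_monotone_measure_inter_eq_mul hEm hEdisj hEcover
  have hPG : ∀ t ∈ Icc (0 : ℝ) 1, P (G t) = ENNReal.ofReal t := fun t ht => by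
    simpa [hEcover] using hGP t ht univ
  refine ⟨fun t => (G t).piecewise Y X, fun t _ => Measurable.piecewise (hGm t) hY hX,
    kyFanContinuousOn_piecewise hGmono hGm hPG X Y,
    funext fun ω => piecewise_eq_of_notMem _ _ _ (hG0 ▸ notMem_empty ω),
    funext fun ω => piecewise_eq_of_mem _ _ _ (hG1 ▸ mem_univ ω),
    fun t ht => map_piecewise_eq_of_measure_inter hX hY (hGm t) ht.1
      (fun s _ => hXpre s ▸ hGP t ht _) (fun s _ => hYpre s ▸ hGP t ht _)⟩

/-- Given two simple random variables `X`, `Y` over the same finite list of values, on a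
nonatomic probability space, there is a continuous path `α̂` from `X` to `Y` whose law at
time `t` is the affine interpolation `(1−t)·law X + t·law Y`. -/
theorem stmt10 {Ω S : Type*} [MeasurableSpace Ω] [MeasurableSpace S] [MetricSpace S]
    [BorelSpace S] [CompleteSpace S] [TopologicalSpace.SeparableSpace S]
    (P : Measure Ω) [IsProbabilityMeasure P] (hna : Nonatomic P)
    {m : ℕ} (a : Fin m → S) (A B : Fin m → Set Ω)
    (hAm : ∀ i, MeasurableSet (A i)) (hBm : ∀ i, MeasurableSet (B i))
    (hAdisj : Pairwise (Function.onFun Disjoint A)) (hAcover : (⋃ i, A i) = Set.univ)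
    (hBdisj : Pairwise (Function.onFun Disjoint B)) (hBcover : (⋃ i, B i) = Set.univ)
    (X Y : Ω → S) (hXval : ∀ i, ∀ ω ∈ A i, X ω = a i) (hYval : ∀ i, ∀ ω ∈ B i, Y ω = a i) :
    ∃ αhat : ℝ → Ω → S,
      (∀ t ∈ Set.Icc (0 : ℝ) 1, Measurable (αhat t)) ∧
      KyFanContinuousOn P αhat (Set.Icc 0 1) ∧
      αhat 0 = X ∧ αhat 1 = Y ∧
      ∀ t ∈ Set.Icc (0 : ℝ) 1,
        P.map (αhat t) = ENNReal.ofReal (1 - t) • P.map X + ENNReal.ofReal t • P.map Y :=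
  stmt10_general P hna a A B hAm hBm hAdisj hAcover hBdisj hBcover X Y hXval hYval
end

section
/- The segment lifting α̂ between simple random variables X and Y satisfies ρ(α̂(s), α̂(t)) ≤ |t − s| for all s, t ∈ [0,1]; in particular it is 1-Lipschitz and continuous in the topology of convergence in probability. -/
open MeasureTheory Filter Topology Set
open scoped ENNReal NNReal

lemma segment_diff_bound {Ω S : Type*} [MeasurableSpace Ω] [MetricSpace S]
    (P : Measure Ω) [IsProbabilityMeasure P]
    {m : ℕ} (a : Fin m → S) (A B : Fin m → Set Ω)
    (hAm : ∀ i, MeasurableSet (A i)) (hBm : ∀ i, MeasurableSet (B i))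
    (hAdisj : Pairwise (Function.onFun Disjoint A)) (hAcover : (⋃ i, A i) = Set.univ)
    (hBdisj : Pairwise (Function.onFun Disjoint B)) (hBcover : (⋃ i, B i) = Set.univ)
    (F : Fin m → Fin m → ℝ → Set Ω)
    (hFsub : ∀ i j γ, F i j γ ⊆ A i ∩ B j)
    (hFm : ∀ i j γ, MeasurableSet (F i j γ))
    (hFmono : ∀ i j, ∀ γ₁ γ₂ : ℝ, γ₁ ≤ γ₂ → F i j γ₁ ⊆ F i j γ₂)
    (hFmeas : ∀ i j, ∀ γ ∈ Set.Icc (0 : ℝ) (P (A i ∩ B j)).toReal,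
      P (F i j γ) = ENNReal.ofReal γ)
    (αhat : ℝ → Ω → S)
    (hseg : ∀ t ∈ Set.Icc (0 : ℝ) 1, ∀ i : Fin m, ∀ ω : Ω,
      ω ∈ ((A i ∩ B i) ∪ (⋃ k : Fin m, ⋃ _ : k ≠ i, F k i (t * (P (A k ∩ B i)).toReal)))
          ∪ (⋃ j : Fin m, ⋃ _ : j ≠ i, (A i ∩ B j) \ F i j (t * (P (A i ∩ B j)).toReal)) →
      αhat t ω = a i)
    {s t : ℝ} (hs : s ∈ Set.Icc (0:ℝ) 1) (ht : t ∈ Set.Icc (0:ℝ) 1) (hst : s ≤ t) :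
    (P {ω | αhat s ω ≠ αhat t ω}).toReal ≤ t - s := by
  set e : Fin m → Fin m → ℝ := fun i j => (P (A i ∩ B j)).toReal with he_def
  have he0 : ∀ i j, 0 ≤ e i j := fun i j => ENNReal.toReal_nonneg
  -- membership in t-level sets is in Icc
  have hIcc : ∀ (u : ℝ), u ∈ Set.Icc (0:ℝ) 1 → ∀ i j, u * e i j ∈ Set.Icc 0 (e i j) := by
    intro u hu i j
    constructor
    · exact mul_nonneg hu.1 (he0 i j)
    · nlinarith [hu.2, he0 i j]
  have hmono : ∀ i j, F i j (s * e i j) ⊆ F i j (t * e i j) :=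
    fun i j => hFmono i j _ _ (by nlinarith [he0 i j])
  -- the diff set is contained in the union of set differences
  have hsub : {ω | αhat s ω ≠ αhat t ω} ⊆
      ⋃ i, ⋃ j, (F i j (t * e i j) \ F i j (s * e i j)) := by
    intro ω hω
    obtain ⟨i, hAi⟩ : ∃ i, ω ∈ A i := by
      have := hAcover ▸ (Set.mem_univ ω); simpa using this
    obtain ⟨j, hBj⟩ : ∃ j, ω ∈ B j := by
      have := hBcover ▸ (Set.mem_univ ω); simpa using this
    by_cases hij : i = j
    · subst hij
      have h1 := hseg s hs i ω (Or.inl (Or.inl ⟨hAi, hBj⟩))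
      have h2 := hseg t ht i ω (Or.inl (Or.inl ⟨hAi, hBj⟩))
      exact absurd (h1.trans h2.symm) hω
    · by_cases hFs : ω ∈ F i j (s * e i j)
      · have hFt : ω ∈ F i j (t * e i j) := hmono i j hFs
        have h1 := hseg s hs j ω (Or.inl (Or.inr (Set.mem_iUnion.2 ⟨i,
          Set.mem_iUnion.2 ⟨hij, hFs⟩⟩)))
        have h2 := hseg t ht j ω (Or.inl (Or.inr (Set.mem_iUnion.2 ⟨i,
          Set.mem_iUnion.2 ⟨hij, hFt⟩⟩)))
        exact absurd (h1.trans h2.symm) hω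
      · by_cases hFt : ω ∈ F i j (t * e i j)
        · exact Set.mem_iUnion.2 ⟨i, Set.mem_iUnion.2 ⟨j, hFt, hFs⟩⟩
        · have hji : j ≠ i := fun h => hij h.symm
          have h1 := hseg s hs i ω (Or.inr (Set.mem_iUnion.2 ⟨j,
            Set.mem_iUnion.2 ⟨hji, ⟨⟨hAi, hBj⟩, hFs⟩⟩⟩))
          have h2 := hseg t ht i ω (Or.inr (Set.mem_iUnion.2 ⟨j,
            Set.mem_iUnion.2 ⟨hji, ⟨⟨hAi, hBj⟩, hFt⟩⟩⟩))
          exact absurd (h1.trans h2.symm) hω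
  -- measure of each piece
  have hpiece : ∀ i j, P (F i j (t * e i j) \ F i j (s * e i j))
      = ENNReal.ofReal (t - s) * P (A i ∩ B j) := by
    intro i j
    rw [measure_diff (hmono i j) (hFm i j _).nullMeasurableSet (measure_ne_top P _),
      hFmeas i j _ (hIcc t ht i j), hFmeas i j _ (hIcc s hs i j),
      ← ENNReal.ofReal_sub _ (mul_nonneg hs.1 (he0 i j))]
    have : t * e i j - s * e i j = (t - s) * e i j := by ring
    rw [this, ENNReal.ofReal_mul (by linarith), he_def,
      ENNReal.ofReal_toReal (measure_ne_top P _)]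
  -- the total mass
  have htotal : ∑ i : Fin m, ∑ j : Fin m, P (A i ∩ B j) = 1 := by
    have hrow : ∀ i, ∑ j : Fin m, P (A i ∩ B j) = P (A i) := by
      intro i
      have h1 : P (⋃ j, A i ∩ B j) = ∑' j, P (A i ∩ B j) :=
        measure_iUnion (fun j k hjk =>
          (hBdisj hjk).mono inter_subset_right inter_subset_right)
          (fun j => (hAm i).inter (hBm j))
      rw [tsum_fintype] at h1
      rw [← h1, ← Set.inter_iUnion, hBcover, Set.inter_univ]
    have h2 : P (⋃ i, A i) = ∑' i, P (A i) := measure_iUnion hAdisj hAm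
    rw [tsum_fintype] at h2
    simp only [hrow]
    rw [← h2, hAcover, measure_univ]
  -- putting it together
  have hle : P {ω | αhat s ω ≠ αhat t ω} ≤ ENNReal.ofReal (t - s) := by
    calc P {ω | αhat s ω ≠ αhat t ω}
        ≤ P (⋃ i, ⋃ j, (F i j (t * e i j) \ F i j (s * e i j))) := measure_mono hsub
      _ ≤ ∑' i : Fin m, P (⋃ j, (F i j (t * e i j) \ F i j (s * e i j))) :=
          measure_iUnion_le _
      _ ≤ ∑' i : Fin m, ∑' j : Fin m, P (F i j (t * e i j) \ F i j (s * e i j)) :=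
          ENNReal.tsum_le_tsum (fun i => measure_iUnion_le _)
      _ = ∑ i : Fin m, ∑ j : Fin m, P (F i j (t * e i j) \ F i j (s * e i j)) := by
          rw [tsum_fintype]; exact Finset.sum_congr rfl (fun i _ => tsum_fintype _)
      _ = ENNReal.ofReal (t - s) := by
          simp only [hpiece, ← Finset.mul_sum]
          rw [htotal, mul_one]
  exact ENNReal.toReal_le_of_le_ofReal (by linarith) hle

lemma kyFan_le_of_ne {Ω S : Type*} [MeasurableSpace Ω] [MetricSpace S]
    (P : Measure Ω) [IsProbabilityMeasure P] (X Y : Ω → S) {c : ℝ} (hc : 0 ≤ c)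
    (h : (P {ω | X ω ≠ Y ω}).toReal ≤ c) : kyFanDist P X Y ≤ c := by
  refine le_of_forall_gt_imp_ge_of_dense fun ε hε => ?_
  have hε0 : 0 < ε := lt_of_le_of_lt hc hε
  refine csInf_le ⟨0, fun x hx => hx.1.le⟩ ⟨hε0, ?_⟩
  have hsub : {ω | ε ≤ dist (X ω) (Y ω)} ⊆ {ω | X ω ≠ Y ω} := by
    intro ω hω hne
    simp only [Set.mem_setOf_eq, hne, dist_self] at hω
    linarith
  calc (P {ω | ε ≤ dist (X ω) (Y ω)}).toReal
      ≤ (P {ω | X ω ≠ Y ω}).toReal :=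
        ENNReal.toReal_mono (measure_ne_top P _) (measure_mono hsub)
    _ ≤ c := h
    _ ≤ ε := hε.le


/-- The segment lifting `α̂` between simple random variables `X` and `Y`, defined via
`[0, e_{ij}]`-families of the intersections `E_{ij} = Aᵢ ∩ Bⱼ`, is 1-Lipschitz for the
Ky Fan metric: `ρ(α̂ s, α̂ t) ≤ |t − s|`. -/
theorem stmt11 {Ω S : Type*} [MeasurableSpace Ω] [MeasurableSpace S] [MetricSpace S]
    [BorelSpace S] [CompleteSpace S] [TopologicalSpace.SeparableSpace S]
    (P : Measure Ω) [IsProbabilityMeasure P]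
    {m : ℕ} (a : Fin m → S) (A B : Fin m → Set Ω)
    (hAm : ∀ i, MeasurableSet (A i)) (hBm : ∀ i, MeasurableSet (B i))
    (hAdisj : Pairwise (Function.onFun Disjoint A)) (hAcover : (⋃ i, A i) = Set.univ)
    (hBdisj : Pairwise (Function.onFun Disjoint B)) (hBcover : (⋃ i, B i) = Set.univ)
    (X Y : Ω → S) (hXval : ∀ i, ∀ ω ∈ A i, X ω = a i) (hYval : ∀ i, ∀ ω ∈ B i, Y ω = a i)
    -- the `[0, e_{ij}]`-families `γ ↦ [E_{ij}]_γ`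
    (F : Fin m → Fin m → ℝ → Set Ω)
    (hFsub : ∀ i j γ, F i j γ ⊆ A i ∩ B j)
    (hFm : ∀ i j γ, MeasurableSet (F i j γ))
    (hFmono : ∀ i j, ∀ γ₁ γ₂ : ℝ, γ₁ ≤ γ₂ → F i j γ₁ ⊆ F i j γ₂)
    (hFmeas : ∀ i j, ∀ γ ∈ Set.Icc (0 : ℝ) (P (A i ∩ B j)).toReal,
      P (F i j γ) = ENNReal.ofReal γ)
    -- the segment lifting `α̂`
    (αhat : ℝ → Ω → S)
    (hseg : ∀ t ∈ Set.Icc (0 : ℝ) 1, ∀ i : Fin m, ∀ ω : Ω,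
      ω ∈ ((A i ∩ B i) ∪ (⋃ k : Fin m, ⋃ _ : k ≠ i, F k i (t * (P (A k ∩ B i)).toReal)))
          ∪ (⋃ j : Fin m, ⋃ _ : j ≠ i, (A i ∩ B j) \ F i j (t * (P (A i ∩ B j)).toReal)) →
      αhat t ω = a i) :
    ∀ s ∈ Set.Icc (0 : ℝ) 1, ∀ t ∈ Set.Icc (0 : ℝ) 1,
      kyFanDist P (αhat s) (αhat t) ≤ |t - s| := by
  intro s hs t ht
  rcases le_total s t with hst | hts
  · rw [abs_of_nonneg (by linarith)]
    exact kyFan_le_of_ne P _ _ (by linarith)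
      (segment_diff_bound P a A B hAm hBm hAdisj hAcover hBdisj hBcover
        F hFsub hFm hFmono hFmeas αhat hseg hs ht hst)
  · rw [abs_of_nonpos (by linarith)]
    have hset : {ω | αhat s ω ≠ αhat t ω} = {ω | αhat t ω ≠ αhat s ω} := by
      ext ω; exact ne_comm
    refine kyFan_le_of_ne P _ _ (by linarith) ?_
    rw [hset]
    simpa using segment_diff_bound P a A B hAm hBm hAdisj hAcover hBdisj hBcover
      F hFsub hFm hFmono hFmeas αhat hseg ht hs hts
end

section
/- The segment lifting α̂ joining simple random variables X and Y satisfies ρ(X, α̂(t)) ≤ ρ(X, Y) for all t ∈ [0,1]. -/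
open MeasureTheory Filter Topology Set
open scoped ENNReal NNReal

/-- The segment lifting `α̂` joining simple random variables `X` and `Y` satisfies
`ρ(X, α̂ t) ≤ ρ(X, Y)` for all `t ∈ [0,1]`. -/
theorem stmt12 {Ω S : Type*} [MeasurableSpace Ω] [MeasurableSpace S] [MetricSpace S]
    [BorelSpace S] [CompleteSpace S] [TopologicalSpace.SeparableSpace S]
    (P : Measure Ω) [IsProbabilityMeasure P]
    {m : ℕ} (a : Fin m → S) (A B : Fin m → Set Ω)
    (hAm : ∀ i, MeasurableSet (A i)) (hBm : ∀ i, MeasurableSet (B i))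
    (hAdisj : Pairwise (Function.onFun Disjoint A)) (hAcover : (⋃ i, A i) = Set.univ)
    (hBdisj : Pairwise (Function.onFun Disjoint B)) (hBcover : (⋃ i, B i) = Set.univ)
    (X Y : Ω → S) (hXval : ∀ i, ∀ ω ∈ A i, X ω = a i) (hYval : ∀ i, ∀ ω ∈ B i, Y ω = a i)
    -- the `[0, e_{ij}]`-families `γ ↦ [E_{ij}]_γ`
    (F : Fin m → Fin m → ℝ → Set Ω)
    (hFsub : ∀ i j γ, F i j γ ⊆ A i ∩ B j)
    (hFm : ∀ i j γ, MeasurableSet (F i j γ))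
    (hFmono : ∀ i j, ∀ γ₁ γ₂ : ℝ, γ₁ ≤ γ₂ → F i j γ₁ ⊆ F i j γ₂)
    (hFmeas : ∀ i j, ∀ γ ∈ Set.Icc (0 : ℝ) (P (A i ∩ B j)).toReal,
      P (F i j γ) = ENNReal.ofReal γ)
    -- the segment lifting `α̂`
    (αhat : ℝ → Ω → S)
    (hseg : ∀ t ∈ Set.Icc (0 : ℝ) 1, ∀ i : Fin m, ∀ ω : Ω,
      ω ∈ ((A i ∩ B i) ∪ (⋃ k : Fin m, ⋃ _ : k ≠ i, F k i (t * (P (A k ∩ B i)).toReal)))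
          ∪ (⋃ j : Fin m, ⋃ _ : j ≠ i, (A i ∩ B j) \ F i j (t * (P (A i ∩ B j)).toReal)) →
      αhat t ω = a i) :
    ∀ t ∈ Set.Icc (0 : ℝ) 1, kyFanDist P X (αhat t) ≤ kyFanDist P X Y := by
  intro t ht
  -- pointwise bound: dist (X ω) (αhat t ω) ≤ dist (X ω) (Y ω)
  have key : ∀ ω, dist (X ω) (αhat t ω) ≤ dist (X ω) (Y ω) := by
    intro ω
    obtain ⟨i, hi⟩ : ∃ i, ω ∈ A i := by
      have : ω ∈ ⋃ i, A i := hAcover ▸ Set.mem_univ ω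
      simpa using this
    obtain ⟨j, hj⟩ : ∃ j, ω ∈ B j := by
      have : ω ∈ ⋃ j, B j := hBcover ▸ Set.mem_univ ω
      simpa using this
    have hX : X ω = a i := hXval i ω hi
    have hY : Y ω = a j := hYval j ω hj
    by_cases hij : i = j
    · subst hij
      have : αhat t ω = a i := hseg t ht i ω (Or.inl (Or.inl ⟨hi, hj⟩))
      simp [hX, hY, this]
    by_cases hF : ω ∈ F i j (t * (P (A i ∩ B j)).toReal)
    · have : αhat t ω = a j := by
        apply hseg t ht j ω
        exact Or.inl (Or.inr (Set.mem_iUnion.2 ⟨i, Set.mem_iUnion.2 ⟨hij, hF⟩⟩))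
      rw [hX, hY, this]
    · have : αhat t ω = a i := by
        apply hseg t ht i ω
        exact Or.inr (Set.mem_iUnion.2 ⟨j, Set.mem_iUnion.2
          ⟨fun h => hij h.symm, ⟨⟨hi, hj⟩, hF⟩⟩⟩)
      simp [hX, this, dist_nonneg]
  -- set inclusion of admissible ε's
  apply csInf_le_csInf
  · exact ⟨0, fun x hx => le_of_lt hx.1⟩
  · refine ⟨2, by norm_num, ?_⟩
    calc (P {ω | 2 ≤ dist (X ω) (Y ω)}).toReal ≤ (P Set.univ).toReal := by
          apply ENNReal.toReal_mono (measure_ne_top P _) (measure_mono (Set.subset_univ _))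
      _ ≤ 2 := by simp
  · rintro ε ⟨hε, hεP⟩
    refine ⟨hε, le_trans ?_ hεP⟩
    apply ENNReal.toReal_mono (measure_ne_top P _)
    exact measure_mono fun ω hω => le_trans hω (key ω)
end

section
/- The space L⁰(Ω,S) of S-valued random variables on a complete nonatomic probability space, endowed with the topology of convergence in probability, is path-connected. -/
/-!
A nonatomic probability measure carries an increasing family of events `(Aₜ)_{t ∈ [0,1]}` with
`A₀ = ∅`, `A₁ = Ω` and `P(Aₜ) = t`: by Sierpiński's intermediate value theorem one can insert an
event of any prescribed measure between two nested events, which builds the family on dyadic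
times by bisection, and unions extend it to all of `[0,1]`. The random variable equal to `Y` on
`Aₜ` and to `X` off it moves from `X` to `Y`; at times `s` and `t` it differs only on `Aₛ ∆ Aₜ`,
of probability `|s - t|`, which bounds the Ky Fan distance.
-/

open MeasureTheory Filter Topology Set
open scoped ENNReal NNReal

open scoped symmDiff

namespace MeasureTheory

variable {Ω : Type*} [MeasurableSpace Ω] {P : Measure Ω}

theorem tendsto_measureReal_iUnion_atTop [IsFiniteMeasure P] {s : ℕ → Set Ω} (hs : Monotone s) :
    Tendsto (fun n => P.real (s n)) atTop (𝓝 (P.real (⋃ n, s n))) :=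
  (ENNReal.tendsto_toReal (measure_ne_top P _)).comp (tendsto_measure_iUnion_atTop hs)

theorem exists_subset_measureReal_le_two_mul (C : Set Ω) {b : ℝ} (hb : 0 ≤ b) :
    ∃ D ⊆ C, MeasurableSet D ∧ P.real D ≤ b ∧
      ∀ E ⊆ C, MeasurableSet E → P.real E ≤ b → P.real E ≤ 2 * P.real D := by
  set V := {x | ∃ E ⊆ C, MeasurableSet E ∧ P.real E ≤ b ∧ P.real E = x}
  have hV : BddAbove V := ⟨b, by rintro _ ⟨E, -, -, hEb, rfl⟩; exact hEb⟩
  have hV0 : (0 : ℝ) ∈ V := ⟨∅, empty_subset C, .empty, by simpa using hb, by simp⟩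
  have le_sup {E} (hEC : E ⊆ C) (hE : MeasurableSet E) (hEb : P.real E ≤ b) : P.real E ≤ sSup V :=
    le_csSup hV ⟨E, hEC, hE, hEb, rfl⟩
  rcases (le_csSup hV hV0).eq_or_lt with hδ | hδ
  · exact ⟨∅, empty_subset C, .empty, by simpa using hb,
      fun E hEC hE hEb => by simpa [← hδ] using le_sup hEC hE hEb⟩
  · obtain ⟨_, ⟨D, hDC, hD, hDb, rfl⟩, hDδ⟩ := exists_lt_of_lt_csSup ⟨0, hV0⟩ (half_lt_self hδ)
    exact ⟨D, hDC, hD, hDb, fun E hEC hE hEb => by linarith [le_sup hEC hE hEb]⟩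

end MeasureTheory

namespace Nonatomic

variable {Ω : Type*} [MeasurableSpace Ω] {P : Measure Ω} [IsFiniteMeasure P]

theorem exists_subset_two_mul_measureReal_le (hna : Nonatomic P) {C : Set Ω}
    (hC : MeasurableSet C) (hC0 : 0 < P.real C) :
    ∃ D ⊆ C, MeasurableSet D ∧ 0 < P.real D ∧ 2 * P.real D ≤ P.real C := by
  obtain ⟨B, hBC, hB, hB0, hlt⟩ :=
    hna C hC (pos_iff_ne_zero.mpr ((measureReal_ne_zero_iff).mp hC0.ne'))
  replace hB0 : 0 < P.real B := ENNReal.toReal_pos hB0.ne' (measure_ne_top P B)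
  replace hlt : P.real B < P.real C := ENNReal.toReal_strict_mono (measure_ne_top P C) hlt
  have hdiff : P.real (C \ B) = P.real C - P.real B := measureReal_sdiff hBC hB
  by_cases hhalf : 2 * P.real B ≤ P.real C
  · exact ⟨B, hBC, hB, hB0, hhalf⟩
  · exact ⟨C \ B, sdiff_subset, hC.diff hB, by linarith, by linarith⟩

theorem exists_subset_measureReal_pos_lt (hna : Nonatomic P) {C : Set Ω}
    (hC : MeasurableSet C) (hC0 : 0 < P.real C) {ε : ℝ} (hε : 0 < ε) :
    ∃ D ⊆ C, MeasurableSet D ∧ 0 < P.real D ∧ P.real D < ε := by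
  have halving (n : ℕ) : ∃ D ⊆ C, MeasurableSet D ∧ 0 < P.real D ∧ 2 ^ n * P.real D ≤ P.real C := by
    induction n with
    | zero => exact ⟨C, subset_rfl, hC, hC0, by simp⟩
    | succ n ih =>
      obtain ⟨D, hDC, hD, hD0, hDle⟩ := ih
      obtain ⟨E, hED, hE, hE0, hEle⟩ := hna.exists_subset_two_mul_measureReal_le hD hD0
      refine ⟨E, hED.trans hDC, hE, hE0, ?_⟩
      calc 2 ^ (n + 1) * P.real E = 2 ^ n * (2 * P.real E) := by ring
        _ ≤ 2 ^ n * P.real D := by gcongr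
        _ ≤ P.real C := hDle
  obtain ⟨n, hn⟩ := pow_unbounded_of_one_lt (P.real C / ε) one_lt_two
  obtain ⟨D, hDC, hD, hD0, hDle⟩ := halving n
  refine ⟨D, hDC, hD, hD0, lt_of_not_ge fun hεD => hn.not_ge ?_⟩
  rw [le_div_iff₀ hε]
  exact (mul_le_mul_of_nonneg_left hεD (by positivity)).trans hDle

theorem exists_subset_measureReal_eq (hna : Nonatomic P) {A : Set Ω} (hA : MeasurableSet A)
    {r : ℝ} (hr0 : 0 ≤ r) (hrA : r ≤ P.real A) :
    ∃ B ⊆ A, MeasurableSet B ∧ P.real B = r := by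
  let Admissible (B : Set Ω) : Prop := MeasurableSet B ∧ B ⊆ A ∧ P.real B ≤ r
  -- Greedily add to `B` at least half of the largest admissible addition.
  have greedy_step (B : Set Ω) : ∃ B', Admissible B → Admissible B' ∧ B ⊆ B' ∧
      ∀ E ⊆ A \ B, MeasurableSet E → P.real B + P.real E ≤ r →
        P.real E ≤ 2 * (P.real B' - P.real B) := by
    by_cases hB : Admissible B
    · obtain ⟨hBm, hBA, hBr⟩ := hB
      obtain ⟨D, hDC, hD, hDb, hDmax⟩ :=
        exists_subset_measureReal_le_two_mul (P := P) (A \ B) (sub_nonneg.mpr hBr)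
      have hBD : P.real (B ∪ D) = P.real B + P.real D :=
        measureReal_union (disjoint_sdiff_right.mono_right hDC) hD
      refine ⟨B ∪ D, fun _ => ⟨⟨hBm.union hD, union_subset hBA (hDC.trans sdiff_subset),
        by linarith⟩, subset_union_left, fun E hEC hE hEr => ?_⟩⟩
      rw [hBD, add_sub_cancel_left]
      exact hDmax E hEC hE (by linarith)
    · exact ⟨B, fun h => absurd h hB⟩
  choose next hnext using greedy_step
  set B : ℕ → Set Ω := fun n => next^[n] ∅
  have hB_succ (n : ℕ) : B (n + 1) = next (B n) := Function.iterate_succ_apply' ..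
  have hB (n : ℕ) : Admissible (B n) := by
    induction n with
    | zero => exact ⟨.empty, empty_subset A, by simpa [B] using hr0⟩
    | succ n ih => exact hB_succ n ▸ (hnext _ ih).1
  have hmono : Monotone B := monotone_nat_of_le_succ fun n => hB_succ n ▸ (hnext _ (hB n)).2.1
  set U := ⋃ n, B n
  have hlim := tendsto_measureReal_iUnion_atTop (P := P) hmono
  have hUr : P.real U ≤ r := le_of_tendsto' hlim fun n => (hB n).2.2
  have hUm : MeasurableSet U := .iUnion fun n => (hB n).1
  refine ⟨U, iUnion_subset fun n => (hB n).2.1, hUm, le_antisymm hUr (not_lt.mp fun hUr' => ?_)⟩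
  -- A small positive piece `E` of `A \ U` would have been a legal addition at every step,
  -- forcing the increments `P(Bₙ₊₁) - P(Bₙ) → 0` to stay above `P(E) / 2`.
  have hAU : P.real (A \ U) = P.real A - P.real U :=
    measureReal_sdiff (iUnion_subset fun n => (hB n).2.1) hUm
  obtain ⟨E, hEAU, hE, hE0, hEr⟩ :=
    hna.exists_subset_measureReal_pos_lt (hA.diff hUm) (by linarith) (sub_pos.mpr hUr')
  have hE_le (n : ℕ) : P.real E ≤ 2 * (P.real (B (n + 1)) - P.real (B n)) := by
    have hBU : B n ⊆ U := subset_iUnion B n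
    rw [hB_succ]
    refine (hnext _ (hB n)).2.2 E (hEAU.trans (sdiff_subset_sdiff_right hBU)) hE ?_
    linarith [measureReal_mono (μ := P) hBU]
  have hincr : Tendsto (fun n => 2 * (P.real (B (n + 1)) - P.real (B n))) atTop (𝓝 0) := by
    simpa using ((hlim.comp (tendsto_add_atTop_nat 1)).sub hlim).const_mul 2
  linarith [ge_of_tendsto' hincr hE_le]

theorem exists_between_measureReal_eq (hna : Nonatomic P) {B C : Set Ω} (hB : MeasurableSet B)
    (hC : MeasurableSet C) (hBC : B ⊆ C) {r : ℝ} (hBr : P.real B ≤ r) (hrC : r ≤ P.real C) :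
    ∃ D, MeasurableSet D ∧ B ⊆ D ∧ D ⊆ C ∧ P.real D = r := by
  obtain ⟨E, hECB, hE, hEr⟩ := hna.exists_subset_measureReal_eq (hC.diff hB) (sub_nonneg.mpr hBr)
    (by rw [measureReal_sdiff hBC hB]; linarith)
  refine ⟨B ∪ E, hB.union hE, subset_union_left, union_subset hBC (hECB.trans sdiff_subset), ?_⟩
  rw [measureReal_union (disjoint_sdiff_right.mono_right hECB) hE, hEr, add_sub_cancel]

end Nonatomic

section DyadicFamily

variable {Ω : Type*} [MeasurableSpace Ω] (P : Measure Ω)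

open Classical in
/-- The fallback value `C` keeps `B ⊆ intermediateSet P B C r ⊆ C` true whenever `B ⊆ C`. -/
noncomputable def intermediateSet (B C : Set Ω) (r : ℝ) : Set Ω :=
  if h : ∃ D, MeasurableSet D ∧ B ⊆ D ∧ D ⊆ C ∧ P.real D = r then h.choose else C

noncomputable def dyadicSet : ℕ → ℕ → Set Ω
  | 0, k => if k = 0 then ∅ else univ
  | n + 1, k =>
    if k % 2 = 0 then dyadicSet n (k / 2)
    else intermediateSet P (dyadicSet n (k / 2)) (dyadicSet n (k / 2 + 1)) (k / 2 ^ (n + 1))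

noncomputable def dyadicFamily (t : ℝ) : Set Ω :=
  ⋃ n, dyadicSet P n ⌊t * 2 ^ n⌋₊

variable {P}

theorem subset_intermediateSet {B C : Set Ω} (hBC : B ⊆ C) (r : ℝ) :
    B ⊆ intermediateSet P B C r := by
  unfold intermediateSet
  split_ifs with h
  exacts [h.choose_spec.2.1, hBC]

theorem intermediateSet_subset (B C : Set Ω) (r : ℝ) : intermediateSet P B C r ⊆ C := by
  unfold intermediateSet
  split_ifs with h
  exacts [h.choose_spec.2.2.1, subset_rfl]

theorem measurableSet_intermediateSet (B : Set Ω) {C : Set Ω} (hC : MeasurableSet C) (r : ℝ) :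
    MeasurableSet (intermediateSet P B C r) := by
  unfold intermediateSet
  split_ifs with h
  exacts [h.choose_spec.1, hC]

theorem measureReal_intermediateSet [IsFiniteMeasure P] (hna : Nonatomic P) {B C : Set Ω}
    (hB : MeasurableSet B) (hC : MeasurableSet C) (hBC : B ⊆ C) {r : ℝ} (hBr : P.real B ≤ r)
    (hrC : r ≤ P.real C) : P.real (intermediateSet P B C r) = r := by
  have h := hna.exists_between_measureReal_eq hB hC hBC hBr hrC
  rw [intermediateSet, dif_pos h]
  exact h.choose_spec.2.2.2

theorem dyadicSet_succ_two_mul (n k : ℕ) : dyadicSet P (n + 1) (2 * k) = dyadicSet P n k := by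
  simp [dyadicSet]

theorem dyadicSet_succ_two_mul_add_one (n k : ℕ) :
    dyadicSet P (n + 1) (2 * k + 1) = intermediateSet P (dyadicSet P n k) (dyadicSet P n (k + 1))
      (↑(2 * k + 1) / 2 ^ (n + 1)) := by
  simp [dyadicSet, Nat.add_mod, Nat.add_div]

theorem dyadicSet_zero_right (n : ℕ) : dyadicSet P n 0 = ∅ := by
  induction n with
  | zero => simp [dyadicSet]
  | succ n ih => simpa using (dyadicSet_succ_two_mul (P := P) n 0).trans ih

theorem measurableSet_dyadicSet (n k : ℕ) : MeasurableSet (dyadicSet P n k) := by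
  induction n generalizing k with
  | zero => by_cases hk : k = 0 <;> simp [dyadicSet, hk]
  | succ n ih =>
    obtain ⟨j, rfl | rfl⟩ := Nat.even_or_odd' k
    · rw [dyadicSet_succ_two_mul]; exact ih j
    · rw [dyadicSet_succ_two_mul_add_one]; exact measurableSet_intermediateSet _ (ih _) _

theorem monotone_dyadicSet (n : ℕ) : Monotone (dyadicSet P n) := by
  induction n with
  | zero => exact monotone_nat_of_le_succ fun k => by simp [dyadicSet]
  | succ n ih =>
    refine monotone_nat_of_le_succ fun k => ?_
    obtain ⟨j, rfl | rfl⟩ := Nat.even_or_odd' k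
    · rw [dyadicSet_succ_two_mul, dyadicSet_succ_two_mul_add_one]
      exact subset_intermediateSet (ih j.le_succ) _
    · rw [dyadicSet_succ_two_mul_add_one, show 2 * j + 1 + 1 = 2 * (j + 1) by ring,
        dyadicSet_succ_two_mul]
      exact intermediateSet_subset _ _ _

theorem measureReal_dyadicSet [IsProbabilityMeasure P] (hna : Nonatomic P) {n k : ℕ}
    (hk : k ≤ 2 ^ n) : P.real (dyadicSet P n k) = k / 2 ^ n := by
  induction n generalizing k with
  | zero => interval_cases k <;> simp [dyadicSet]
  | succ n ih =>
    rw [pow_succ] at hk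
    obtain ⟨j, rfl | rfl⟩ := Nat.even_or_odd' k
    · rw [dyadicSet_succ_two_mul, ih (by omega)]
      field_simp
      push_cast
      ring
    · have hj : P.real (dyadicSet P n j) = j / 2 ^ n := ih (by omega)
      have hj1 : P.real (dyadicSet P n (j + 1)) = ↑(j + 1) / 2 ^ n := ih (by omega)
      rw [dyadicSet_succ_two_mul_add_one]
      refine measureReal_intermediateSet hna (measurableSet_dyadicSet n j)
        (measurableSet_dyadicSet n (j + 1)) (monotone_dyadicSet n j.le_succ) ?_ ?_
      · rw [hj, pow_succ, div_le_div_iff₀ (by positivity) (by positivity)]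
        push_cast
        nlinarith [pow_pos (two_pos : (0 : ℝ) < 2) n]
      · rw [hj1, pow_succ, div_le_div_iff₀ (by positivity) (by positivity)]
        push_cast
        nlinarith [pow_pos (two_pos : (0 : ℝ) < 2) n]

theorem measurableSet_dyadicFamily (t : ℝ) : MeasurableSet (dyadicFamily P t) :=
  .iUnion fun n => measurableSet_dyadicSet n _

theorem monotone_dyadicFamily : Monotone (dyadicFamily P) := fun _ _ hst =>
  iUnion_mono fun n => monotone_dyadicSet n (Nat.floor_mono (by gcongr))

theorem dyadicFamily_zero : dyadicFamily P 0 = ∅ := by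
  simp [dyadicFamily, dyadicSet_zero_right]

theorem dyadicFamily_one : dyadicFamily P 1 = univ :=
  eq_univ_of_subset (subset_iUnion _ 0) (by simp [dyadicSet])

theorem measureReal_dyadicFamily [IsProbabilityMeasure P] (hna : Nonatomic P) {t : ℝ}
    (ht : t ∈ Icc (0 : ℝ) 1) : P.real (dyadicFamily P t) = t := by
  have hchain : Monotone fun n => dyadicSet P n ⌊t * 2 ^ n⌋₊ := by
    refine monotone_nat_of_le_succ fun n => ?_
    rw [← dyadicSet_succ_two_mul]
    refine monotone_dyadicSet _ (Nat.le_floor ?_)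
    have := Nat.floor_le (mul_nonneg ht.1 (pow_nonneg zero_le_two n))
    push_cast
    rw [pow_succ]
    linarith
  have hfloor (n : ℕ) : ⌊t * 2 ^ n⌋₊ ≤ 2 ^ n :=
    Nat.floor_le_of_le (by simpa using mul_le_of_le_one_left (pow_nonneg zero_le_two n) ht.2)
  have hlim : Tendsto (fun n : ℕ => P.real (dyadicSet P n ⌊t * 2 ^ n⌋₊)) atTop (𝓝 t) := by
    simp only [measureReal_dyadicSet hna (hfloor _)]
    exact (tendsto_nat_floor_mul_div_atTop ht.1).comp
      (tendsto_pow_atTop_atTop_of_one_lt one_lt_two)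
  exact tendsto_nhds_unique (tendsto_measureReal_iUnion_atTop hchain) hlim

theorem measureReal_symmDiff_dyadicFamily [IsProbabilityMeasure P] (hna : Nonatomic P) {s t : ℝ}
    (hs : s ∈ Icc (0 : ℝ) 1) (ht : t ∈ Icc (0 : ℝ) 1) :
    P.real (dyadicFamily P s ∆ dyadicFamily P t) = |s - t| := by
  wlog hst : s ≤ t generalizing s t
  · rw [symmDiff_comm, abs_sub_comm]
    exact this ht hs (le_of_not_ge hst)
  rw [symmDiff_of_le (monotone_dyadicFamily hst),
    measureReal_sdiff (monotone_dyadicFamily hst) (measurableSet_dyadicFamily s),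
    measureReal_dyadicFamily hna hs, measureReal_dyadicFamily hna ht, abs_of_nonpos (by linarith)]
  ring

end DyadicFamily

theorem Set.setOf_piecewise_ne_subset_symmDiff {α β : Type*} (s t : Set α) (f g : α → β)
    [∀ x, Decidable (x ∈ s)] [∀ x, Decidable (x ∈ t)] :
    {x | s.piecewise f g x ≠ t.piecewise f g x} ⊆ s ∆ t := by
  intro x hx
  by_cases hs : x ∈ s <;> by_cases ht : x ∈ t <;> simp_all [Set.mem_symmDiff]

section KyFan

variable {Ω S : Type*} [MeasurableSpace Ω] [PseudoMetricSpace S] {P : Measure Ω}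
  [IsFiniteMeasure P]

theorem kyFanDist_le_measureReal_ne (X Y : Ω → S) :
    kyFanDist P X Y ≤ P.real {ω | X ω ≠ Y ω} := by
  refine le_of_forall_gt_imp_ge_of_dense fun ε hε => ?_
  have hε0 : 0 < ε := measureReal_nonneg.trans_lt hε
  have hsub : {ω | ε ≤ dist (X ω) (Y ω)} ⊆ {ω | X ω ≠ Y ω} := fun ω hω hXY => by
    simp only [mem_ofPred_eq, hXY, dist_self] at hω
    linarith
  exact csInf_le ⟨0, fun _ h => h.1.le⟩ ⟨hε0, (measureReal_mono hsub).trans hε.le⟩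

theorem kyFanContinuousOn_piecewise_s16 {A : ℝ → Set Ω} [∀ t, DecidablePred (· ∈ A t)] {I : Set ℝ}
    (hA : ∀ s ∈ I, ∀ t ∈ I, P.real (A s ∆ A t) ≤ |s - t|) (X Y : Ω → S) :
    KyFanContinuousOn P (fun t => (A t).piecewise Y X) I := by
  intro t ht ε hε
  refine ⟨ε, hε, fun s hs hst => ?_⟩
  calc kyFanDist P ((A s).piecewise Y X) ((A t).piecewise Y X)
      ≤ P.real {ω | (A s).piecewise Y X ω ≠ (A t).piecewise Y X ω} :=
        kyFanDist_le_measureReal_ne _ _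
    _ ≤ P.real (A s ∆ A t) := measureReal_mono (setOf_piecewise_ne_subset_symmDiff ..)
    _ ≤ |s - t| := hA s hs t ht
    _ < ε := hst

end KyFan

theorem stmt16_general {Ω S : Type*} [MeasurableSpace Ω] [MeasurableSpace S] [MetricSpace S]
    (P : Measure Ω) [IsProbabilityMeasure P] (hna : Nonatomic P)
    (X Y : Ω → S) (hX : Measurable X) (hY : Measurable Y) :
    ∃ γ : ℝ → Ω → S,
      (∀ t ∈ Set.Icc (0 : ℝ) 1, Measurable (γ t)) ∧
      KyFanContinuousOn P γ (Set.Icc 0 1) ∧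
      γ 0 = X ∧ γ 1 = Y := by
  classical
  refine ⟨fun t => (dyadicFamily P t).piecewise Y X,
    fun t _ => hY.piecewise (measurableSet_dyadicFamily t) hX,
    kyFanContinuousOn_piecewise_s16
      (fun s hs t ht => (measureReal_symmDiff_dyadicFamily hna hs ht).le) X Y, ?_, ?_⟩
  · exact funext fun ω => piecewise_eq_of_notMem _ _ _ (dyadicFamily_zero (P := P) ▸ notMem_empty ω)
  · exact funext fun ω => piecewise_eq_of_mem _ _ _ (dyadicFamily_one (P := P) ▸ mem_univ ω)

/-- `L⁰(Ω,S)` with the topology of convergence in probability is path-connected: any two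
random variables are joined by a Ky Fan continuous path of random variables. -/
theorem stmt16 {Ω S : Type*} [MeasurableSpace Ω] [MeasurableSpace S] [MetricSpace S]
    [BorelSpace S] [CompleteSpace S] [TopologicalSpace.SeparableSpace S]
    (P : Measure Ω) [IsProbabilityMeasure P] (hna : Nonatomic P)
    (X Y : Ω → S) (hX : Measurable X) (hY : Measurable Y) :
    ∃ γ : ℝ → Ω → S,
      (∀ t ∈ Set.Icc (0 : ℝ) 1, Measurable (γ t)) ∧
      KyFanContinuousOn P γ (Set.Icc 0 1) ∧
      γ 0 = X ∧ γ 1 = Y :=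
  stmt16_general P hna X Y hX hY
end
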